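/- arXiv:1707.01958 — 4 statements merged into one kernel-verified Lean document; each statement's English description precedes it below -/
import Mathlib

section
/- Let σ ∈ (0,2), C₁, C₂, C₃ > 0, and let G : ℝ → ℝ be twice continuously differentiable with |G′(y)| ≤ C₃|y|^{σ−1} and |G″(y)| ≤ C₃|y|^{σ−2} for all |y| ≥ 1. Then there exists a constant C > 0, depending only on σ, C₁, C₂, C₃ and on the suprema of |G′| and |G″| on [−5,5], such that for every Borel measure ν on ℝ concentrated on (0,∞) satisfying ν([r,∞)) ≤ C₁ r^{−2} for all r > 0 and ∫ (u² ∧ 1) dν(u) ≤ C₂, and every y ∈ ℝ, the function u ↦ G(y+u) + G(y−u) − 2G(y) is ν-integrable and |∫₀^∞ (G(y+u)+G(y−u)−2G(y)) dν(u)| ≤ C(1+|y|)^{σ−2} · ln(2+|y|). -/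
open Filter Set MeasureTheory

lemma dyadic_cover {a x : ℝ} (ha : 0 < a) (hx : a < x) :
    ∃ k : ℕ, a * 2 ^ k < x ∧ x ≤ a * 2 ^ (k + 1) := by
  have hxa : 1 < x / a := (one_lt_div ha).mpr hx
  set L := Real.logb 2 (x / a) with hL
  have hL0 : 0 < L := Real.logb_pos one_lt_two hxa
  have hpow : (2:ℝ) ^ L = x / a := Real.rpow_logb two_pos (by norm_num) (by positivity)
  obtain ⟨m, hm⟩ : ∃ m : ℕ, ⌈L⌉₊ = m + 1 :=
    ⟨⌈L⌉₊ - 1, (Nat.succ_pred_eq_of_pos (Nat.ceil_pos.mpr hL0)).symm⟩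
  refine ⟨m, ?_, ?_⟩
  · have h1 : (m : ℝ) < L := by
      have := Nat.ceil_lt_add_one hL0.le
      rw [hm] at this; push_cast at this; linarith
    have h2 : (2:ℝ) ^ (m:ℝ) < (2:ℝ) ^ L :=
      Real.rpow_lt_rpow_left_iff one_lt_two |>.mpr h1
    rw [Real.rpow_natCast, hpow] at h2
    calc a * 2 ^ m < a * (x / a) := by
          exact mul_lt_mul_of_pos_left h2 ha
      _ = x := by field_simp
  · have h1 : L ≤ ((m:ℝ) + 1) := by
      have := Nat.le_ceil L
      rw [hm] at this; push_cast at this; linarith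
    have h2 : (2:ℝ) ^ L ≤ (2:ℝ) ^ ((m+1:ℕ):ℝ) := by
      apply Real.rpow_le_rpow_left_iff one_lt_two |>.mpr
      push_cast; linarith
    rw [Real.rpow_natCast, hpow] at h2
    calc x = a * (x / a) := by field_simp
      _ ≤ a * 2 ^ (m+1) := by nlinarith

lemma tail_lintegral_bound (ν : Measure ℝ) {C₁ σ : ℝ} (hC₁ : 0 < C₁)
    (hσ0 : 0 < σ) (hσ2 : σ < 2)
    (htail : ∀ r : ℝ, 0 < r → ν (Set.Ici r) ≤ ENNReal.ofReal (C₁ * r ^ (-2 : ℝ)))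
    {R : ℝ} (hR : 0 < R) :
    ∫⁻ u in Set.Ioi R, ENNReal.ofReal (u ^ σ) ∂ν
      ≤ ENNReal.ofReal (C₁ * 2 ^ σ * (1 - 2 ^ (σ - 2))⁻¹ * R ^ (σ - 2)) := by
  have hq0 : (0:ℝ) < 2 ^ (σ - 2) := Real.rpow_pos_of_pos two_pos _
  have hq1 : (2:ℝ) ^ (σ - 2) < 1 :=
    Real.rpow_lt_one_of_one_lt_of_neg one_lt_two (by linarith)
  set q : ℝ := 2 ^ (σ - 2) with hqdef
  have hcover : Set.Ioi R ⊆ ⋃ k : ℕ, Set.Ioc (R * 2 ^ k) (R * 2 ^ (k + 1)) := by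
    intro x hx
    obtain ⟨k, h1, h2⟩ := dyadic_cover hR hx
    exact Set.mem_iUnion.mpr ⟨k, h1, h2⟩
  calc ∫⁻ u in Set.Ioi R, ENNReal.ofReal (u ^ σ) ∂ν
      ≤ ∫⁻ u in ⋃ k : ℕ, Set.Ioc (R * 2 ^ k) (R * 2 ^ (k + 1)),
          ENNReal.ofReal (u ^ σ) ∂ν := lintegral_mono_set hcover
    _ ≤ ∑' k : ℕ, ∫⁻ u in Set.Ioc (R * 2 ^ k) (R * 2 ^ (k + 1)),
          ENNReal.ofReal (u ^ σ) ∂ν := lintegral_iUnion_le _ _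
    _ ≤ ∑' k : ℕ, ENNReal.ofReal (C₁ * 2 ^ σ * R ^ (σ - 2)) * ENNReal.ofReal q ^ k := by
        apply ENNReal.tsum_le_tsum
        intro k
        have hRk : (0:ℝ) < R * 2 ^ k := by positivity
        have step1 : ∫⁻ u in Set.Ioc (R * 2 ^ k) (R * 2 ^ (k + 1)),
            ENNReal.ofReal (u ^ σ) ∂ν
            ≤ ENNReal.ofReal ((R * 2 ^ (k+1)) ^ σ) * ν (Set.Ioc (R * 2 ^ k) (R * 2 ^ (k + 1))) := by
          rw [← setLIntegral_const]
          apply setLIntegral_mono measurable_const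
          intro x hx
          apply ENNReal.ofReal_le_ofReal
          exact Real.rpow_le_rpow (le_of_lt (lt_trans hRk hx.1)) hx.2 hσ0.le
        have step2 : ν (Set.Ioc (R * 2 ^ k) (R * 2 ^ (k + 1)))
            ≤ ENNReal.ofReal (C₁ * (R * 2 ^ k) ^ (-2:ℝ)) := by
          refine le_trans (measure_mono ?_) (htail _ hRk)
          exact fun x hx => le_of_lt hx.1
        calc ∫⁻ u in Set.Ioc (R * 2 ^ k) (R * 2 ^ (k + 1)), ENNReal.ofReal (u ^ σ) ∂ν
            ≤ ENNReal.ofReal ((R * 2 ^ (k+1)) ^ σ) * ENNReal.ofReal (C₁ * (R * 2 ^ k) ^ (-2:ℝ)) :=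
              step1.trans (mul_le_mul_right step2 _)
          _ = ENNReal.ofReal ((R * 2 ^ (k+1)) ^ σ * (C₁ * (R * 2 ^ k) ^ (-2:ℝ))) := by
              rw [ENNReal.ofReal_mul (by positivity : (0:ℝ) ≤ (R * 2 ^ (k+1)) ^ σ),
                ENNReal.ofReal_mul hC₁.le]
          _ = ENNReal.ofReal (C₁ * 2 ^ σ * R ^ (σ - 2) * q ^ k) := by
              congr 1
              have e1 : (R * 2 ^ (k+1)) ^ σ = R ^ σ * (2:ℝ) ^ ((k+1 : ℕ) * σ) := by
                rw [Real.mul_rpow hR.le (by positivity), ← Real.rpow_natCast 2 (k+1),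
                  ← Real.rpow_mul (by norm_num)]
              have e2 : (R * 2 ^ k) ^ (-2:ℝ) = R ^ (-2:ℝ) * (2:ℝ) ^ ((k:ℝ) * (-2)) := by
                rw [Real.mul_rpow hR.le (by positivity), ← Real.rpow_natCast 2 k,
                  ← Real.rpow_mul (by norm_num)]
              have e3 : q ^ k = (2:ℝ) ^ ((k:ℝ) * (σ - 2)) := by
                rw [hqdef, ← Real.rpow_natCast (2 ^ (σ-2) : ℝ) k, ← Real.rpow_mul (by norm_num) ,
                  mul_comm (σ-2)]
              have h2 : (2:ℝ) ^ ((k+1:ℕ) * σ) * (2:ℝ) ^ ((k:ℝ) * (-2))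
                  = (2:ℝ) ^ σ * (2:ℝ) ^ ((k:ℝ) * (σ - 2)) := by
                rw [← Real.rpow_add two_pos, ← Real.rpow_add two_pos]
                congr 1; push_cast; ring
              have hR2 : R ^ σ * R ^ (-2:ℝ) = R ^ (σ - 2) := by
                rw [← Real.rpow_add hR]; congr 1
              rw [e1, e2, e3, ← hR2]
              linear_combination C₁ * R ^ σ * R ^ (-2:ℝ) * h2
          _ = ENNReal.ofReal (C₁ * 2 ^ σ * R ^ (σ - 2)) * ENNReal.ofReal q ^ k := by
              rw [ENNReal.ofReal_mul (by positivity), ← ENNReal.ofReal_pow hq0.le]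
    _ = ENNReal.ofReal (C₁ * 2 ^ σ * R ^ (σ - 2)) * (1 - ENNReal.ofReal q)⁻¹ := by
        rw [ENNReal.tsum_mul_left, ENNReal.tsum_geometric]
    _ ≤ ENNReal.ofReal (C₁ * 2 ^ σ * (1 - 2 ^ (σ - 2))⁻¹ * R ^ (σ - 2)) := by
        have : (1 - ENNReal.ofReal q)⁻¹ = ENNReal.ofReal ((1 - q)⁻¹) := by
          rw [← ENNReal.ofReal_one, ← ENNReal.ofReal_sub _ hq0.le,
            ENNReal.ofReal_inv_of_pos (by linarith)]
        rw [this, ← ENNReal.ofReal_mul (by positivity)]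
        apply ENNReal.ofReal_le_ofReal
        apply le_of_eq; ring

lemma middle_lintegral_bound (ν : Measure ℝ) {C₁ : ℝ} (hC₁ : 0 < C₁)
    (htail : ∀ r : ℝ, 0 < r → ν (Set.Ici r) ≤ ENNReal.ofReal (C₁ * r ^ (-2 : ℝ)))
    {R : ℝ} (hR : 1 ≤ R) :
    ∫⁻ u in Set.Ioc 1 R, ENNReal.ofReal (u ^ 2) ∂ν
      ≤ ENNReal.ofReal (4 * C₁ * (2 * Real.log R + 1)) := by
  set N : ℕ := ⌊Real.logb 2 R⌋₊ + 1 with hN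
  set S : ℕ → Set ℝ := fun k => Set.Ioc ((2:ℝ) ^ k) (2 ^ (k + 1)) ∩ Set.Ioc 1 R with hS
  have hcover : Set.Ioc 1 R ⊆ ⋃ k : ℕ, S k := by
    intro x hx
    obtain ⟨k, h1, h2⟩ := dyadic_cover one_pos hx.1
    rw [one_mul] at h1 h2
    exact Set.mem_iUnion.mpr ⟨k, ⟨h1, h2⟩, hx⟩
  have hub : R < 2 ^ N := by
    have h1 : Real.logb 2 R < (N : ℝ) := by
      have := Nat.lt_floor_add_one (Real.logb 2 R)
      rw [hN]; push_cast; linarith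
    have := Real.rpow_lt_rpow_left_iff (x := 2) one_lt_two |>.mpr h1
    rwa [Real.rpow_logb two_pos (by norm_num) (by linarith), Real.rpow_natCast] at this
  calc ∫⁻ u in Set.Ioc 1 R, ENNReal.ofReal (u ^ 2) ∂ν
      ≤ ∫⁻ u in ⋃ k : ℕ, S k, ENNReal.ofReal (u ^ 2) ∂ν := lintegral_mono_set hcover
    _ ≤ ∑' k : ℕ, ∫⁻ u in S k, ENNReal.ofReal (u ^ 2) ∂ν := lintegral_iUnion_le _ _
    _ ≤ ∑' k : ℕ, (if k < N then ENNReal.ofReal (4 * C₁) else 0) := by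
        apply ENNReal.tsum_le_tsum
        intro k
        by_cases hk : k < N
        · simp only [hk, if_true]
          have h2k : (0:ℝ) < 2 ^ k := by positivity
          have step1 : ∫⁻ u in S k, ENNReal.ofReal (u ^ 2) ∂ν
              ≤ ENNReal.ofReal (((2:ℝ) ^ (k+1)) ^ 2) * ν (S k) := by
            rw [← setLIntegral_const]
            apply setLIntegral_mono measurable_const
            intro x hx
            apply ENNReal.ofReal_le_ofReal
            have hx1 : (0:ℝ) < x := lt_trans h2k hx.1.1
            nlinarith [hx.1.2]
          have step2 : ν (S k) ≤ ENNReal.ofReal (C₁ * ((2:ℝ) ^ k) ^ (-2:ℝ)) := by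
            refine le_trans (measure_mono ?_) (htail _ h2k)
            exact fun x hx => le_of_lt hx.1.1
          refine le_trans (step1.trans (mul_le_mul_right step2 _)) ?_
          rw [← ENNReal.ofReal_mul (by positivity)]
          apply ENNReal.ofReal_le_ofReal
          have hpow : ((2:ℝ) ^ k) ^ (-2:ℝ) = (((2:ℝ) ^ k) ^ (2:ℕ))⁻¹ := by
            rw [← Real.rpow_natCast ((2:ℝ)^k) 2, ← Real.rpow_neg h2k.le]; norm_num
          rw [hpow]
          apply le_of_eq
          have hne : (((2:ℝ) ^ k) ^ (2:ℕ)) ≠ 0 := by positivity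
          field_simp
          ring
        · simp only [hk, if_false]
          have hempty : S k = ∅ := by
            ext x
            simp only [hS, Set.mem_inter_iff, Set.mem_Ioc, Set.mem_empty_iff_false, iff_false]
            rintro ⟨⟨hx1, _⟩, _, hx2⟩
            have hNk : (2:ℝ) ^ N ≤ 2 ^ k :=
              pow_le_pow_right₀ one_le_two (Nat.le_of_not_lt hk)
            linarith
          rw [hempty]
          simp
    _ = (N : ENNReal) * ENNReal.ofReal (4 * C₁) := by
        rw [tsum_eq_sum (s := Finset.range N) (by intro k hk; simp [Finset.mem_range] at hk; simp [hk])]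
        simp [Finset.sum_ite_of_true, Finset.mem_range]
    _ ≤ ENNReal.ofReal (4 * C₁ * (2 * Real.log R + 1)) := by
        have hNle : (N : ℝ) ≤ 2 * Real.log R + 1 := by
          have h1 : (⌊Real.logb 2 R⌋₊ : ℝ) ≤ Real.logb 2 R :=
            Nat.floor_le (Real.logb_nonneg one_lt_two hR)
          have h2 : Real.logb 2 R ≤ 2 * Real.log R := by
            rw [Real.logb, div_le_iff₀ (Real.log_pos one_lt_two)]
            have hlR : 0 ≤ Real.log R := Real.log_nonneg hR
            nlinarith [Real.log_two_gt_d9]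
          rw [hN]; push_cast; linarith
        rw [← ENNReal.ofReal_natCast N, ← ENNReal.ofReal_mul (by positivity)]
        apply ENNReal.ofReal_le_ofReal
        nlinarith [Real.log_nonneg hR, hC₁.le]

lemma deriv_facts {G : ℝ → ℝ} (hG : ContDiff ℝ 2 G) :
    Differentiable ℝ G ∧ Differentiable ℝ (deriv G) ∧ Continuous (deriv (deriv G)) := by
  have hG2 : ContDiff ℝ ((1:WithTop ℕ∞) + 1) G := by norm_num; exact hG
  have h1 := contDiff_succ_iff_deriv.mp hG2
  have hG1 : ContDiff ℝ ((0:WithTop ℕ∞) + 1) (deriv G) := by norm_num; exact h1.2.2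
  have h2 := contDiff_succ_iff_deriv.mp hG1
  exact ⟨h1.1, h2.1, h2.2.2.continuous⟩

lemma rpow_int_bound {σ C₃ : ℝ} {g : ℝ → ℝ} (hσ0 : 0 < σ) (hC₃ : 0 < C₃)
    (hg : Continuous g) (hbound : ∀ t : ℝ, 1 ≤ t → |g t| ≤ C₃ * t ^ (σ - 1))
    {z : ℝ} (hz : 1 ≤ z) :
    |∫ t in (1:ℝ)..z, g t| ≤ C₃ / σ * z ^ σ := by
  have hzσ1 : (1:ℝ) ≤ z ^ σ := by
    calc (1:ℝ) = 1 ^ σ := (Real.one_rpow σ).symm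
    _ ≤ z ^ σ := Real.rpow_le_rpow zero_le_one hz hσ0.le
  have hval : ∫ t in (1:ℝ)..z, C₃ * t ^ (σ - 1) = C₃ * ((z ^ σ - 1) / σ) := by
    rw [intervalIntegral.integral_const_mul, integral_rpow (Or.inl (by linarith))]
    congr 1
    rw [show σ - 1 + 1 = σ by ring, Real.one_rpow]
  have hIb : IntervalIntegrable (fun t => C₃ * t ^ (σ - 1)) volume 1 z := by
    apply ContinuousOn.intervalIntegrable
    apply ContinuousOn.mul continuousOn_const
    apply ContinuousOn.rpow_const (f := fun t : ℝ => t) continuousOn_id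
    intro t ht
    rw [Set.uIcc_of_le hz] at ht
    exact Or.inl (by intro h; rw [h] at ht; linarith [ht.1])
  have h1 : |∫ t in (1:ℝ)..z, g t| ≤ |∫ t in (1:ℝ)..z, C₃ * t ^ (σ - 1)| := by
    rw [← Real.norm_eq_abs]
    apply intervalIntegral.norm_integral_le_abs_of_norm_le ?_ hIb
    filter_upwards [MeasureTheory.ae_restrict_mem measurableSet_uIoc] with t ht
    rw [Set.uIoc_of_le hz] at ht
    have ht1 : (1:ℝ) ≤ t := ht.1.le
    rw [Real.norm_eq_abs]
    refine (hbound t ht1).trans (le_refl _)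
  have h2 : |∫ t in (1:ℝ)..z, C₃ * t ^ (σ - 1)| = C₃ * ((z ^ σ - 1) / σ) := by
    rw [hval, abs_of_nonneg (mul_nonneg hC₃.le (div_nonneg (by linarith) hσ0.le))]
  have h3 : C₃ * ((z ^ σ - 1) / σ) ≤ C₃ / σ * z ^ σ := by
    have he : C₃ * ((z ^ σ - 1) / σ) = C₃ / σ * z ^ σ - C₃ / σ := by
      field_simp
    have : 0 < C₃ / σ := div_pos hC₃ hσ0
    linarith
  linarith [h1.trans_eq h2]

lemma growth_G {σ C₃ : ℝ} {G : ℝ → ℝ} (hσ0 : 0 < σ) (hσ2 : σ < 2) (hC₃ : 0 < C₃)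
    (hG : ContDiff ℝ 2 G)
    (hG' : ∀ y : ℝ, 1 ≤ |y| → |deriv G y| ≤ C₃ * |y| ^ (σ - 1)) :
    ∃ D₀ : ℝ, 0 < D₀ ∧ ∀ x : ℝ, |G x| ≤ D₀ * (1 + |x|) ^ σ := by
  obtain ⟨hd, hd1, hc2⟩ := deriv_facts hG
  have hcont : Continuous (deriv G) := hd1.continuous
  obtain ⟨M₀, hM₀⟩ := (isCompact_Icc (a := (-1:ℝ)) (b := 1)).exists_bound_of_continuousOn
    hG.continuous.continuousOn
  have hCσ : 0 < C₃ / σ := div_pos hC₃ hσ0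
  set D₀ := max M₀ 0 + C₃ / σ with hD₀
  have hM₀0 : 0 ≤ max M₀ 0 := le_max_right _ _
  have hD₀pos : 0 < D₀ := by positivity
  refine ⟨D₀, hD₀pos, ?_⟩
  intro x
  have hbase : (0:ℝ) < 1 + |x| := by positivity
  have hone : (1:ℝ) ≤ (1 + |x|) ^ σ := by
    calc (1:ℝ) = 1 ^ σ := (Real.one_rpow σ).symm
    _ ≤ (1 + |x|) ^ σ := Real.rpow_le_rpow zero_le_one (by linarith [abs_nonneg x]) hσ0.le
  have hsplit : D₀ * (1 + |x|) ^ σ = max M₀ 0 * (1 + |x|) ^ σ + C₃ / σ * (1 + |x|) ^ σ := by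
    rw [hD₀]; ring
  rcases le_or_gt |x| 1 with hx | hx
  · have h := (hM₀ x (abs_le.mp hx)).trans (le_max_left M₀ 0)
    rw [Real.norm_eq_abs] at h
    calc |G x| ≤ max M₀ 0 := h
      _ ≤ max M₀ 0 * (1 + |x|) ^ σ := le_mul_of_one_le_right hM₀0 hone
      _ ≤ D₀ * (1 + |x|) ^ σ := by rw [hsplit]; nlinarith
  · rcases le_or_gt 1 x with hx1 | hx1
    · -- x ≥ 1
      have hftc : ∫ t in (1:ℝ)..x, deriv G t = G x - G 1 :=
        intervalIntegral.integral_deriv_eq_sub (fun t _ => hd.differentiableAt)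
          (hcont.intervalIntegrable 1 x)
      have hb := rpow_int_bound hσ0 hC₃ hcont
        (fun t ht => by simpa [abs_of_pos (by linarith : (0:ℝ) < t)] using hG' t (by rwa [abs_of_pos (by linarith)])) hx1
      rw [hftc] at hb
      have h01 := (hM₀ 1 (by norm_num)).trans (le_max_left M₀ 0)
      rw [Real.norm_eq_abs] at h01
      have hxs : x ^ σ ≤ (1 + |x|) ^ σ :=
        Real.rpow_le_rpow (by linarith) (by cases abs_cases x <;> linarith) hσ0.le
      have h1 : |G x| ≤ |G 1| + C₃ / σ * x ^ σ := by
        have h2 := abs_sub_abs_le_abs_sub (G x) (G 1)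
        linarith
      calc |G x| ≤ |G 1| + C₃ / σ * x ^ σ := h1
        _ ≤ max M₀ 0 * (1 + |x|) ^ σ + C₃ / σ * (1 + |x|) ^ σ := by
            have := le_mul_of_one_le_right hM₀0 hone
            nlinarith
        _ = D₀ * (1 + |x|) ^ σ := hsplit.symm
    · -- x < -1  (since |x| > 1 and x < 1)
      have hx1' : x < -1 := by rcases abs_cases x with ⟨h, _⟩ | ⟨h, _⟩ <;> linarith
      have hftc : ∫ t in x..(-1:ℝ), deriv G t = G (-1) - G x :=
        intervalIntegral.integral_deriv_eq_sub (fun t _ => hd.differentiableAt)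
          (hcont.intervalIntegrable x (-1))
      have hcomp : ∫ t in (1:ℝ)..(-x), deriv G (-t) = ∫ t in x..(-1:ℝ), deriv G t := by
        rw [intervalIntegral.integral_comp_neg (fun t => deriv G t)]
        norm_num
      have hb := rpow_int_bound hσ0 hC₃ (hcont.comp continuous_neg)
        (fun t ht => by
          have h0t : (0:ℝ) < t := by linarith
          have := hG' (-t) (by rw [abs_neg, abs_of_pos h0t]; exact ht)
          simpa [abs_neg, abs_of_pos h0t] using this) (by linarith : (1:ℝ) ≤ -x)
      rw [show (fun t => (deriv G ∘ Neg.neg) t) = fun t => deriv G (-t) from rfl] at hb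
      rw [hcomp, hftc] at hb
      have h01 := (hM₀ (-1) (by norm_num)).trans (le_max_left M₀ 0)
      rw [Real.norm_eq_abs] at h01
      have hxs : (-x) ^ σ ≤ (1 + |x|) ^ σ :=
        Real.rpow_le_rpow (by linarith) (by cases abs_cases x <;> linarith) hσ0.le
      have h1 : |G x| ≤ |G (-1)| + C₃ / σ * (-x) ^ σ := by
        have h2 : |G x| - |G (-1)| ≤ |G (-1) - G x| := by
          rw [abs_sub_comm]; exact abs_sub_abs_le_abs_sub (G x) (G (-1))
        linarith
      calc |G x| ≤ |G (-1)| + C₃ / σ * (-x) ^ σ := h1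
        _ ≤ max M₀ 0 * (1 + |x|) ^ σ + C₃ / σ * (1 + |x|) ^ σ := by
            have := le_mul_of_one_le_right hM₀0 hone
            nlinarith
        _ = D₀ * (1 + |x|) ^ σ := hsplit.symm

lemma two_rpow_inv_le {σ : ℝ} (hσ0 : 0 < σ) (hσ2 : σ < 2) :
    (4:ℝ)⁻¹ ≤ (2:ℝ) ^ (σ - 2) ∧ ((2:ℝ) ^ (σ - 2))⁻¹ ≤ 4 := by
  have h1 : (2:ℝ) ^ (-2:ℝ) ≤ (2:ℝ) ^ (σ - 2) :=
    Real.rpow_le_rpow_of_exponent_le one_le_two (by linarith)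
  have h2 : (2:ℝ) ^ (-2:ℝ) = 4⁻¹ := by
    rw [Real.rpow_neg (by norm_num)]; norm_num
  have hq4 : (4:ℝ)⁻¹ ≤ (2:ℝ) ^ (σ - 2) := h2 ▸ h1
  refine ⟨hq4, ?_⟩
  calc ((2:ℝ) ^ (σ - 2))⁻¹ ≤ ((4:ℝ)⁻¹)⁻¹ := inv_anti₀ (by norm_num) hq4
    _ = 4 := by norm_num

lemma growth_G'' {σ C₃ : ℝ} {G : ℝ → ℝ} (hσ0 : 0 < σ) (hσ2 : σ < 2) (hC₃ : 0 < C₃)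
    (hG : ContDiff ℝ 2 G)
    (hG'' : ∀ y : ℝ, 1 ≤ |y| → |deriv (deriv G) y| ≤ C₃ * |y| ^ (σ - 2)) :
    ∃ D₂ : ℝ, 0 < D₂ ∧ ∀ x : ℝ, |deriv (deriv G) x| ≤ D₂ * (1 + |x|) ^ (σ - 2) := by
  obtain ⟨_, _, hc2⟩ := deriv_facts hG
  obtain ⟨M₂, hM₂⟩ := (isCompact_Icc (a := (-1:ℝ)) (b := 1)).exists_bound_of_continuousOn
    hc2.continuousOn
  set D₂ := 4 * (max M₂ 0 + C₃) with hD₂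
  have hM₂0 : 0 ≤ max M₂ 0 := le_max_right _ _
  have hD₂pos : 0 < D₂ := by positivity
  refine ⟨D₂, hD₂pos, ?_⟩
  intro x
  have hbase : (0:ℝ) < 1 + |x| := by positivity
  obtain ⟨hq4, _⟩ := two_rpow_inv_le hσ0 hσ2
  rcases le_or_gt |x| 1 with hx | hx
  · have h := (hM₂ x (abs_le.mp hx)).trans (le_max_left M₂ 0)
    rw [Real.norm_eq_abs] at h
    have h2 : (2:ℝ) ^ (σ - 2) ≤ (1 + |x|) ^ (σ - 2) :=
      Real.rpow_le_rpow_of_nonpos hbase (by linarith) (by linarith)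
    calc |deriv (deriv G) x| ≤ max M₂ 0 := h
      _ ≤ D₂ * (1 + |x|) ^ (σ - 2) := by nlinarith
  · have h := hG'' x hx.le
    have hxpos : (0:ℝ) < |x| := by linarith
    have h2 : (2 * |x|) ^ (σ - 2) ≤ (1 + |x|) ^ (σ - 2) :=
      Real.rpow_le_rpow_of_nonpos hbase (by linarith) (by linarith)
    have h3 : (2 * |x|) ^ (σ - 2) = 2 ^ (σ - 2) * |x| ^ (σ - 2) :=
      Real.mul_rpow (by norm_num) (abs_nonneg x)
    have hxs : (0:ℝ) < |x| ^ (σ - 2) := Real.rpow_pos_of_pos hxpos _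
    calc |deriv (deriv G) x| ≤ C₃ * |x| ^ (σ - 2) := h
      _ ≤ (max M₂ 0 + C₃) * |x| ^ (σ - 2) := by nlinarith
      _ = D₂ * (4⁻¹ * |x| ^ (σ - 2)) := by rw [hD₂]; ring
      _ ≤ D₂ * ((2:ℝ) ^ (σ - 2) * |x| ^ (σ - 2)) :=
          mul_le_mul_of_nonneg_left (mul_le_mul_of_nonneg_right hq4 hxs.le) hD₂pos.le
      _ = D₂ * (2 * |x|) ^ (σ - 2) := by rw [h3]
      _ ≤ D₂ * (1 + |x|) ^ (σ - 2) := mul_le_mul_of_nonneg_left h2 hD₂pos.le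

lemma taylor_bound {G : ℝ → ℝ} (hG : ContDiff ℝ 2 G) {y u K : ℝ} (hu : 0 ≤ u)
    (hK : ∀ t : ℝ, |t| ≤ u → |deriv (deriv G) (y + t)| + |deriv (deriv G) (y - t)| ≤ K) :
    |G (y + u) + G (y - u) - 2 * G y| ≤ K * u ^ 2 := by
  obtain ⟨hd, hd1, _⟩ := deriv_facts hG
  set g1 : ℝ → ℝ := fun t => deriv G (y + t) - deriv G (y - t) with hg1
  set g : ℝ → ℝ := fun t => G (y + t) + G (y - t) - 2 * G y with hg
  have Hplus : ∀ (F : ℝ → ℝ), Differentiable ℝ F → ∀ t : ℝ,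
      HasDerivAt (fun s => F (y + s)) (deriv F (y + t)) t := by
    intro F hF t
    have h := (hF (y + t)).hasDerivAt.comp t ((hasDerivAt_id t).const_add y)
    simpa [Function.comp_def] using h
  have Hminus : ∀ (F : ℝ → ℝ), Differentiable ℝ F → ∀ t : ℝ,
      HasDerivAt (fun s => F (y - s)) (-deriv F (y - t)) t := by
    intro F hF t
    have h := (hF (y - t)).hasDerivAt.comp t ((hasDerivAt_id t).const_sub y)
    simpa [Function.comp_def] using h
  have Hg1 : ∀ t : ℝ, HasDerivAt g1 (deriv (deriv G) (y + t) + deriv (deriv G) (y - t)) t := by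
    intro t
    have h := (Hplus (deriv G) hd1 t).sub (Hminus (deriv G) hd1 t)
    simpa [hg1, sub_neg_eq_add, Pi.sub_def] using h
  have Hg : ∀ t : ℝ, HasDerivAt g (g1 t) t := by
    intro t
    have h := ((Hplus G hd t).add (Hminus G hd t)).sub_const (2 * G y)
    simpa [hg, hg1, sub_eq_add_neg] using h
  have hK0 : 0 ≤ K := by
    refine le_trans ?_ (hK 0 (by simpa using hu))
    positivity
  have step1 : ∀ t ∈ Set.Icc 0 u, |g1 t| ≤ K * u := by
    intro t ht
    have h0 : g1 0 = 0 := by simp [hg1]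
    have hb := Convex.norm_image_sub_le_of_norm_deriv_le (f := g1)
      (fun s _ => (Hg1 s).differentiableAt)
      (fun s hs => by
        rw [(Hg1 s).deriv, Real.norm_eq_abs]
        refine (abs_add_le _ _).trans (hK s ?_)
        rw [abs_of_nonneg hs.1]; exact hs.2)
      (convex_Icc 0 u) (Set.left_mem_Icc.mpr hu) ht
    rw [h0, sub_zero, sub_zero, Real.norm_eq_abs, Real.norm_eq_abs] at hb
    calc |g1 t| ≤ K * |t| := hb
      _ ≤ K * u := by
          rw [abs_of_nonneg ht.1]
          exact mul_le_mul_of_nonneg_left ht.2 hK0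
  have h0 : g 0 = 0 := by simp [hg]; ring
  have hb := Convex.norm_image_sub_le_of_norm_deriv_le (f := g)
    (fun s _ => (Hg s).differentiableAt)
    (fun s hs => by rw [(Hg s).deriv, Real.norm_eq_abs]; exact step1 s hs)
    (convex_Icc 0 u) (Set.left_mem_Icc.mpr hu) (Set.right_mem_Icc.mpr hu)
  rw [h0, sub_zero, sub_zero, Real.norm_eq_abs, Real.norm_eq_abs, abs_of_nonneg hu] at hb
  calc |G (y + u) + G (y - u) - 2 * G y| = |g u| := by rw [hg]
    _ ≤ K * u * u := hb
    _ = K * u ^ 2 := by ring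

set_option maxHeartbeats 1000000 in
/-- Lemma A.1 (boundary case `α = 2`): for `G ∈ C²` with `|G'(y)| ≤ C₃|y|^(σ-1)` and
`|G''(y)| ≤ C₃|y|^(σ-2)` for `|y| ≥ 1`, `σ ∈ (0,2)`, the symmetrized second
difference `K(y) = ∫₀^∞ (G(y+u)+G(y-u)-2G(y)) dν(u)` satisfies
`|K(y)| ≤ C(1+|y|)^(σ-2) ln(2+|y|)`, uniformly over Lévy-type measures `ν` on `(0,∞)`
with `ν([r,∞)) ≤ C₁ r^(-2)` and `∫(u²∧1)dν ≤ C₂`. -/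
theorem second_difference_bound_alpha_two
    (σ C₁ C₂ C₃ : ℝ) (hσ : σ ∈ Set.Ioo (0:ℝ) 2)
    (hC₁ : 0 < C₁) (hC₂ : 0 < C₂) (hC₃ : 0 < C₃)
    (G : ℝ → ℝ) (hG : ContDiff ℝ 2 G)
    (hG' : ∀ y : ℝ, 1 ≤ |y| → |deriv G y| ≤ C₃ * |y| ^ (σ - 1))
    (hG'' : ∀ y : ℝ, 1 ≤ |y| → |deriv (deriv G) y| ≤ C₃ * |y| ^ (σ - 2)) :
    ∃ C : ℝ, 0 < C ∧
      ∀ ν : Measure ℝ, ν (Set.Ioi (0:ℝ))ᶜ = 0 →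
        (∀ r : ℝ, 0 < r → ν (Set.Ici r) ≤ ENNReal.ofReal (C₁ * r ^ (-2 : ℝ))) →
        (∫⁻ u, ENNReal.ofReal (min (u ^ 2) 1) ∂ν) ≤ ENNReal.ofReal C₂ →
        ∀ y : ℝ,
          Integrable (fun u => G (y + u) + G (y - u) - 2 * G y) ν ∧
          |∫ u, (G (y + u) + G (y - u) - 2 * G y) ∂ν|
            ≤ C * (1 + |y|) ^ (σ - 2) * Real.log (2 + |y|) := by
  obtain ⟨hσ0, hσ2⟩ := hσ
  obtain ⟨D₀, hD₀, hG0⟩ := growth_G hσ0 hσ2 hC₃ hG hG'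
  obtain ⟨D₂, hD₂, hG2b⟩ := growth_G'' hσ0 hσ2 hC₃ hG hG''
  have hq0 : (0:ℝ) < 2 ^ (σ - 2) := Real.rpow_pos_of_pos two_pos _
  have hq1 : (2:ℝ) ^ (σ - 2) < 1 :=
    Real.rpow_lt_one_of_one_lt_of_neg one_lt_two (by linarith)
  set K₂ : ℝ := C₁ * 2 ^ σ * (1 - 2 ^ (σ - 2))⁻¹ with hK₂def
  have hK₂ : 0 < K₂ :=
    mul_pos (mul_pos hC₁ (Real.rpow_pos_of_pos two_pos σ)) (inv_pos.mpr (by linarith))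
  refine ⟨16*D₂*C₂ + 128*D₂*C₁ + 288*D₀*K₂ + 1, by positivity, ?_⟩
  intro ν hconc htail hmass y
  set C : ℝ := 16*D₂*C₂ + 128*D₂*C₁ + 288*D₀*K₂ + 1 with hCdef
  have hC : 0 < C := by positivity
  set f : ℝ → ℝ := fun u => G (y + u) + G (y - u) - 2 * G y with hf
  have hfc : Continuous f := by
    apply Continuous.sub ?_ continuous_const
    exact (hG.continuous.comp (continuous_const.add continuous_id)).add
      (hG.continuous.comp (continuous_const.sub continuous_id))
  set Ry : ℝ := max 1 ((1 + |y|)/2) with hRydef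
  have hRy1 : (1:ℝ) ≤ Ry := le_max_left _ _
  have hRy0 : (0:ℝ) < Ry := lt_of_lt_of_le one_pos hRy1
  have hRyhalf : (1 + |y|)/2 ≤ Ry := le_max_right _ _
  have hRyle : Ry ≤ 2 + |y| :=
    max_le (by linarith [abs_nonneg y]) (by linarith [abs_nonneg y])
  have hyb : (0:ℝ) < 1 + |y| := by positivity
  set P : ℝ := (1 + |y|) ^ (σ - 2) with hP
  have hPpos : 0 < P := Real.rpow_pos_of_pos hyb _
  set L2 : ℝ := Real.log (2 + |y|) with hL2
  have hL2half : 1/2 ≤ L2 := by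
    have h1 : Real.log 2 ≤ L2 := Real.log_le_log (by norm_num) (by linarith [abs_nonneg y])
    have := Real.log_two_gt_d9
    linarith
  -- pointwise bound for u ≤ Ry
  have key2 : ∀ z : ℝ, |z - y| ≤ Ry → |deriv (deriv G) z| ≤ 4 * D₂ * P := by
    intro z hz
    have h1 : (1 + |y|)/2 ≤ 1 + |z| := by
      rcases le_total ((1 + |y|)/2) 1 with h | h
      · linarith [abs_nonneg z]
      · have hEq : Ry = (1 + |y|)/2 := max_eq_right h
        have h2 : |y| - |z| ≤ |y - z| := abs_sub_abs_le_abs_sub y z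
        rw [abs_sub_comm] at h2
        rw [hEq] at hz
        linarith
    have h2 : (1 + |z|) ^ (σ - 2) ≤ ((1 + |y|)/2) ^ (σ - 2) :=
      Real.rpow_le_rpow_of_nonpos (by positivity) h1 (by linarith)
    have h3 : ((1 + |y|)/2) ^ (σ - 2) = P * ((2:ℝ) ^ (σ - 2))⁻¹ := by
      rw [Real.div_rpow (by positivity) (by norm_num), hP, div_eq_mul_inv]
    have h4 := (two_rpow_inv_le hσ0 hσ2).2
    calc |deriv (deriv G) z| ≤ D₂ * (1 + |z|) ^ (σ - 2) := hG2b z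
      _ ≤ D₂ * (P * ((2:ℝ) ^ (σ - 2))⁻¹) := by
          rw [← h3]; exact mul_le_mul_of_nonneg_left h2 hD₂.le
      _ ≤ 4 * D₂ * P := by
          nlinarith [mul_le_mul_of_nonneg_left h4 (mul_nonneg hD₂.le hPpos.le)]
  have P1 : ∀ u : ℝ, 0 ≤ u → u ≤ Ry → |f u| ≤ 8 * D₂ * P * u ^ 2 := by
    intro u hu huR
    show |G (y + u) + G (y - u) - 2 * G y| ≤ 8 * D₂ * P * u ^ 2
    apply taylor_bound hG hu
    intro t ht
    have hb1 := key2 (y + t) (by simpa using ht.trans huR)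
    have hb2 := key2 (y - t) (by simp only [sub_sub_cancel_left, abs_neg]; exact ht.trans huR)
    linarith
  have P2 : ∀ u : ℝ, Ry ≤ u → |f u| ≤ 36 * D₀ * u ^ σ := by
    intro u hu
    have hu1 : (1:ℝ) ≤ u := le_trans hRy1 hu
    have hu2 : 1 + |y| ≤ 2 * u := by
      have := hRyhalf.trans hu; linarith
    have h9 : ((3:ℝ)) ^ σ ≤ 9 := by
      calc (3:ℝ) ^ σ ≤ (3:ℝ) ^ (2:ℝ) := Real.rpow_le_rpow_of_exponent_le (by norm_num) hσ2.le
        _ = 9 := by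
            rw [show (2:ℝ) = ((2:ℕ):ℝ) by norm_num, Real.rpow_natCast]; norm_num
    have huσ : (0:ℝ) ≤ u ^ σ := Real.rpow_nonneg (by linarith) σ
    have h3σ : ∀ z : ℝ, 1 + |z| ≤ 3*u → (1 + |z|) ^ σ ≤ 9 * u ^ σ := by
      intro z hzb
      calc (1 + |z|) ^ σ ≤ (3*u) ^ σ := Real.rpow_le_rpow (by positivity) hzb hσ0.le
        _ = 3 ^ σ * u ^ σ := Real.mul_rpow (by norm_num) (by linarith)
        _ ≤ 9 * u ^ σ := mul_le_mul_of_nonneg_right h9 huσ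
    have b1 : (1 + |y + u|) ≤ 3 * u := by
      have := abs_add_le y u
      rw [abs_of_nonneg (by linarith : (0:ℝ) ≤ u)] at this
      linarith
    have b2 : (1 + |y - u|) ≤ 3 * u := by
      have := abs_sub y u
      rw [abs_of_nonneg (by linarith : (0:ℝ) ≤ u)] at this
      linarith
    have b3 : (1 + |y|) ≤ 3 * u := by linarith
    have g1 := (hG0 (y+u)).trans (mul_le_mul_of_nonneg_left (h3σ _ b1) hD₀.le)
    have g2 := (hG0 (y-u)).trans (mul_le_mul_of_nonneg_left (h3σ _ b2) hD₀.le)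
    have g3 := (hG0 y).trans (mul_le_mul_of_nonneg_left (h3σ _ b3) hD₀.le)
    have hrw : f u = G (y + u) + G (y - u) + -(2 * G y) := by rw [hf]; ring
    calc |f u| = |G (y + u) + G (y - u) + -(2 * G y)| := by rw [hrw]
      _ ≤ |G (y + u)| + |G (y - u)| + |(-(2 * G y))| := abs_add_three _ _ _
      _ = |G (y + u)| + |G (y - u)| + 2 * |G y| := by
          rw [abs_neg, abs_mul, abs_two]
      _ ≤ 36 * D₀ * u ^ σ := by nlinarith
  -- integral bounds
  have hfnn : ∀ u : ℝ, (0:ℝ) ≤ |f u| := fun u => abs_nonneg _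
  have B1 : ∫⁻ u in Set.Ioc (0:ℝ) 1, ENNReal.ofReal |f u| ∂ν
      ≤ ENNReal.ofReal (8 * D₂ * P) * ENNReal.ofReal C₂ := by
    have hmono : ∫⁻ u in Set.Ioc (0:ℝ) 1, ENNReal.ofReal |f u| ∂ν
        ≤ ∫⁻ u in Set.Ioc (0:ℝ) 1,
            ENNReal.ofReal (8 * D₂ * P) * ENNReal.ofReal (min (u ^ 2) 1) ∂ν := by
      apply setLIntegral_mono' measurableSet_Ioc
      intro x hx
      have hx2 : min (x ^ 2) 1 = x ^ 2 := min_eq_left (by nlinarith [hx.1, hx.2])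
      rw [hx2, ← ENNReal.ofReal_mul (by positivity)]
      exact ENNReal.ofReal_le_ofReal (P1 x hx.1.le (hx.2.trans hRy1))
    refine hmono.trans ?_
    rw [lintegral_const_mul (ENNReal.ofReal (8 * D₂ * P))
      (f := fun u : ℝ => ENNReal.ofReal (min (u ^ 2) 1))
      (((measurable_id'.pow_const 2).min measurable_const).ennreal_ofReal)]
    exact mul_le_mul_right ((setLIntegral_le_lintegral _ _).trans hmass) _
  have B2 : ∫⁻ u in Set.Ioc (1:ℝ) Ry, ENNReal.ofReal |f u| ∂ν
      ≤ ENNReal.ofReal (8 * D₂ * P) * ENNReal.ofReal (16 * C₁ * L2) := by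
    have hmono : ∫⁻ u in Set.Ioc (1:ℝ) Ry, ENNReal.ofReal |f u| ∂ν
        ≤ ∫⁻ u in Set.Ioc (1:ℝ) Ry,
            ENNReal.ofReal (8 * D₂ * P) * ENNReal.ofReal (u ^ 2) ∂ν := by
      apply setLIntegral_mono' measurableSet_Ioc
      intro x hx
      rw [← ENNReal.ofReal_mul (by positivity)]
      exact ENNReal.ofReal_le_ofReal (P1 x (by linarith [hx.1]) hx.2)
    refine hmono.trans ?_
    rw [lintegral_const_mul (ENNReal.ofReal (8 * D₂ * P))
      (f := fun u : ℝ => ENNReal.ofReal (u ^ 2))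
      ((measurable_id'.pow_const 2).ennreal_ofReal)]
    apply mul_le_mul_right
    refine (middle_lintegral_bound ν hC₁ htail hRy1).trans ?_
    apply ENNReal.ofReal_le_ofReal
    have hlog : Real.log Ry ≤ L2 := Real.log_le_log hRy0 hRyle
    have hlog0 : 0 ≤ Real.log Ry := Real.log_nonneg hRy1
    nlinarith
  have B3 : ∫⁻ u in Set.Ioi Ry, ENNReal.ofReal |f u| ∂ν
      ≤ ENNReal.ofReal (36 * D₀) * ENNReal.ofReal (K₂ * Ry ^ (σ - 2)) := by
    have hmono : ∫⁻ u in Set.Ioi Ry, ENNReal.ofReal |f u| ∂ν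
        ≤ ∫⁻ u in Set.Ioi Ry, ENNReal.ofReal (36 * D₀) * ENNReal.ofReal (u ^ σ) ∂ν := by
      apply setLIntegral_mono' measurableSet_Ioi
      intro x hx
      rw [← ENNReal.ofReal_mul (by positivity)]
      exact ENNReal.ofReal_le_ofReal (P2 x hx.le)
    refine hmono.trans ?_
    rw [lintegral_const_mul (ENNReal.ofReal (36 * D₀))
      (f := fun u : ℝ => ENNReal.ofReal (u ^ σ))
      ((measurable_id'.pow measurable_const).ennreal_ofReal)]
    exact mul_le_mul_right (tail_lintegral_bound ν hC₁ hσ0 hσ2 htail hRy0) _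
  -- splitting
  have hsplit1 : ∫⁻ u, ENNReal.ofReal |f u| ∂ν
      = ∫⁻ u in Set.Ioi (0:ℝ), ENNReal.ofReal |f u| ∂ν := by
    have h := lintegral_add_compl (μ := ν) (fun u => ENNReal.ofReal |f u|)
      (measurableSet_Ioi (a := (0:ℝ)))
    rw [setLIntegral_measure_zero _ _ hconc, add_zero] at h
    exact h.symm
  have hsplit2 : ∫⁻ u in Set.Ioi (0:ℝ), ENNReal.ofReal |f u| ∂ν
      = (∫⁻ u in Set.Ioc (0:ℝ) 1, ENNReal.ofReal |f u| ∂ν)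
        + (∫⁻ u in Set.Ioc (1:ℝ) Ry, ENNReal.ofReal |f u| ∂ν)
        + (∫⁻ u in Set.Ioi Ry, ENNReal.ofReal |f u| ∂ν) := by
    rw [← Set.Ioc_union_Ioi_eq_Ioi hRy0.le,
      lintegral_union measurableSet_Ioi (Set.Ioc_disjoint_Ioi le_rfl),
      ← Set.Ioc_union_Ioc_eq_Ioc zero_le_one hRy1,
      lintegral_union measurableSet_Ioc
        (by rw [Set.disjoint_left]; rintro x ⟨_, h1⟩ ⟨h2, _⟩; linarith)]
  -- total bound
  have hRyP : K₂ * Ry ^ (σ - 2) ≤ K₂ * (4 * P) := by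
    apply mul_le_mul_of_nonneg_left ?_ hK₂.le
    have h1 : Ry ^ (σ - 2) ≤ ((1 + |y|)/2) ^ (σ - 2) :=
      Real.rpow_le_rpow_of_nonpos (by positivity) hRyhalf (by linarith)
    have h3 : ((1 + |y|)/2) ^ (σ - 2) = P * ((2:ℝ) ^ (σ - 2))⁻¹ := by
      rw [Real.div_rpow (by positivity) (by norm_num), hP, div_eq_mul_inv]
    have h4 := (two_rpow_inv_le hσ0 hσ2).2
    rw [h3] at h1
    nlinarith
  set T : ℝ := 8*D₂*P*C₂ + 8*D₂*P*(16*C₁*L2) + 36*D₀*(K₂*(4*P)) with hT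
  have hLle : ∫⁻ u, ENNReal.ofReal |f u| ∂ν ≤ ENNReal.ofReal T := by
    rw [hsplit1, hsplit2]
    have hB3' := B3.trans (mul_le_mul_right (ENNReal.ofReal_le_ofReal hRyP) _)
    calc (∫⁻ u in Set.Ioc (0:ℝ) 1, ENNReal.ofReal |f u| ∂ν)
        + (∫⁻ u in Set.Ioc (1:ℝ) Ry, ENNReal.ofReal |f u| ∂ν)
        + (∫⁻ u in Set.Ioi Ry, ENNReal.ofReal |f u| ∂ν)
        ≤ ENNReal.ofReal (8 * D₂ * P) * ENNReal.ofReal C₂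
          + ENNReal.ofReal (8 * D₂ * P) * ENNReal.ofReal (16 * C₁ * L2)
          + ENNReal.ofReal (36 * D₀) * ENNReal.ofReal (K₂ * (4 * P)) :=
          add_le_add (add_le_add B1 B2) hB3'
      _ = ENNReal.ofReal T := by
          rw [← ENNReal.ofReal_mul (by positivity), ← ENNReal.ofReal_mul (by positivity),
            ← ENNReal.ofReal_mul (by positivity),
            ← ENNReal.ofReal_add (by positivity) (by positivity),
            ← ENNReal.ofReal_add (by positivity) (by positivity)]
  have hTle : T ≤ C * P * L2 := by
    clear_value T C P L2 K₂
    have e : C * P * L2 - T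
        = P * ((16*D₂*C₂) * (L2 - 1/2) + (288*D₀*K₂) * (L2 - 1/2) + L2) := by
      rw [hT, hCdef]; ring
    have h1 : (0:ℝ) ≤ L2 - 1/2 := by linarith
    have h2 := mul_nonneg (by positivity : (0:ℝ) ≤ 16*D₂*C₂) h1
    have h3 := mul_nonneg (by positivity : (0:ℝ) ≤ 288*D₀*K₂) h1
    have h4 : (0:ℝ) ≤ 16*D₂*C₂ * (L2 - 1/2) + 288*D₀*K₂ * (L2 - 1/2) + L2 := by linarith
    have h5 := mul_nonneg hPpos.le h4
    linarith [e, h5]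
  have hLle2 : ∫⁻ u, ENNReal.ofReal |f u| ∂ν ≤ ENNReal.ofReal (C * P * L2) :=
    hLle.trans (ENNReal.ofReal_le_ofReal hTle)
  have hfin : HasFiniteIntegral f ν := by
    rw [hasFiniteIntegral_iff_norm]
    simp only [Real.norm_eq_abs]
    exact lt_of_le_of_lt hLle2 ENNReal.ofReal_lt_top
  have hCPL2 : (0:ℝ) ≤ C * P * L2 :=
    mul_nonneg (mul_nonneg hC.le hPpos.le) (by linarith)
  refine ⟨⟨hfc.aestronglyMeasurable, hfin⟩, ?_⟩
  have h := norm_integral_le_lintegral_norm (μ := ν) f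
  simp only [Real.norm_eq_abs] at h
  calc |∫ u, f u ∂ν| ≤ (∫⁻ u, ENNReal.ofReal |f u| ∂ν).toReal := h
    _ ≤ C * P * L2 := ENNReal.toReal_le_of_le_ofReal hCPL2 hLle2
end

section
/- Let α ∈ (0,2], β ∈ (0,2) with α + β ≥ 2, and C₁, C₂ > 0. Let F̂ : ℝ → ℝ be three times continuously differentiable with F̂(y) = (1/(2−β))|y|^{2−β} sgn y for all |y| ≥ 1. Then there exists a constant C > 0, depending only on α, β, C₁, C₂ and F̂, such that for every Borel measure ν on ℝ concentrated on (0,∞) satisfying ν([r,∞)) ≤ C₁ r^{−α} for all r > 0 and ∫ (u² ∧ 1) dν(u) ≤ C₂, and every y ∈ ℝ, the function u ↦ F̂′(y+u) + F̂′(y−u) − 2F̂′(y) is ν-integrable and |∫₀^∞ (F̂′(y+u)+F̂′(y−u)−2F̂′(y)) dν(u)| ≤ C. -/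
open Filter Set MeasureTheory
open scoped ENNReal NNReal


lemma rdb_deriv_pos {β : ℝ} (hβ2 : β < 2) {Fhat : ℝ → ℝ}
    (hFeq : ∀ y : ℝ, 1 ≤ |y| → Fhat y = (1 / (2 - β)) * |y| ^ (2 - β) * Real.sign y)
    {y : ℝ} (hy : 1 < y) : deriv Fhat y = y ^ (1 - β) := by
  have h2β : (0:ℝ) < 2 - β := by linarith
  have heq : Fhat =ᶠ[nhds y] fun z => (1 / (2 - β)) * z ^ (2 - β) := by
    filter_upwards [Ioi_mem_nhds hy] with z hz
    have hz1 : (1:ℝ) < z := hz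
    rw [hFeq z (by rw [abs_of_pos (by linarith)]; linarith),
        abs_of_pos (by linarith), Real.sign_of_pos (by linarith), mul_one]
  rw [heq.deriv_eq]
  have h : HasDerivAt (fun z : ℝ => (1 / (2 - β)) * z ^ (2 - β))
      ((1 / (2 - β)) * ((2 - β) * y ^ (2 - β - 1))) y :=
    (Real.hasDerivAt_rpow_const (Or.inl (by positivity))).const_mul _
  rw [h.deriv, show (2:ℝ) - β - 1 = 1 - β by ring]
  field_simp

lemma rdb_deriv_neg {β : ℝ} (hβ2 : β < 2) {Fhat : ℝ → ℝ}
    (hFeq : ∀ y : ℝ, 1 ≤ |y| → Fhat y = (1 / (2 - β)) * |y| ^ (2 - β) * Real.sign y)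
    {y : ℝ} (hy : y < -1) : deriv Fhat y = (-y) ^ (1 - β) := by
  have h2β : (0:ℝ) < 2 - β := by linarith
  have heq : Fhat =ᶠ[nhds y] fun z => -((1 / (2 - β)) * (-z) ^ (2 - β)) := by
    filter_upwards [Iio_mem_nhds hy] with z hz
    have hz1 : z < -1 := hz
    rw [hFeq z (by rw [abs_of_neg (by linarith)]; linarith),
        abs_of_neg (by linarith), Real.sign_of_neg (by linarith)]
    ring
  rw [heq.deriv_eq]
  have hinner : HasDerivAt (fun z : ℝ => -z) (-1) y := (hasDerivAt_id y).neg
  have houter : HasDerivAt (fun w : ℝ => w ^ (2 - β)) ((2 - β) * (-y) ^ (2 - β - 1)) (-y) :=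
    Real.hasDerivAt_rpow_const (Or.inl (ne_of_gt (by linarith)))
  have h : HasDerivAt (fun z : ℝ => -((1 / (2 - β)) * (-z) ^ (2 - β)))
      (-((1 / (2 - β)) * ((2 - β) * (-y) ^ (2 - β - 1) * (-1)))) y :=
    (((houter.comp y hinner)).const_mul _).neg
  rw [h.deriv, show (2:ℝ) - β - 1 = 1 - β by ring]
  field_simp

lemma rdb_gderiv_pos {g : ℝ → ℝ} {c a : ℝ} (hg : ∀ z : ℝ, 1 < z → g z = c * z ^ a)
    {y : ℝ} (hy : 1 < y) : deriv g y = c * (a * y ^ (a - 1)) := by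
  have heq : g =ᶠ[nhds y] fun z => c * z ^ a := by
    filter_upwards [Ioi_mem_nhds hy] with z hz using hg z hz
  rw [heq.deriv_eq]
  exact ((Real.hasDerivAt_rpow_const (Or.inl (ne_of_gt (by linarith)))).const_mul c).deriv

lemma rdb_gderiv_neg {g : ℝ → ℝ} {c a : ℝ} (hg : ∀ z : ℝ, z < -1 → g z = c * (-z) ^ a)
    {y : ℝ} (hy : y < -1) : deriv g y = -(c * (a * (-y) ^ (a - 1))) := by
  have heq : g =ᶠ[nhds y] fun z => c * (-z) ^ a := by
    filter_upwards [Iio_mem_nhds hy] with z hz using hg z hz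
  rw [heq.deriv_eq]
  have hinner : HasDerivAt (fun z : ℝ => -z) (-1) y := (hasDerivAt_id y).neg
  have houter : HasDerivAt (fun w : ℝ => w ^ a) (a * (-y) ^ (a - 1)) (-y) :=
    Real.hasDerivAt_rpow_const (Or.inl (ne_of_gt (by linarith)))
  have h : HasDerivAt (fun z : ℝ => c * (-z) ^ a) (c * (a * (-y) ^ (a - 1) * (-1))) y :=
    (houter.comp y hinner).const_mul c
  rw [h.deriv]; ring

lemma rdb_rpow_subadd {p : ℝ} (hp0 : 0 ≤ p) (hp1 : p ≤ 1) {x y : ℝ} (hx : 0 ≤ x) (hy : 0 ≤ y) :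
    (x + y) ^ p ≤ x ^ p + y ^ p := by
  have h := NNReal.rpow_add_le_add_rpow x.toNNReal y.toNNReal hp0 hp1
  have := NNReal.coe_le_coe.2 h
  push_cast [NNReal.coe_rpow, Real.coe_toNNReal x hx, Real.coe_toNNReal y hy] at this
  exact this

lemma rdb_abs_rpow_sub {p : ℝ} (hp0 : 0 ≤ p) (hp1 : p ≤ 1) (a b : ℝ) :
    |a| ^ p - |b| ^ p ≤ |a - b| ^ p := by
  have h1 : |a| ≤ |b| + |a - b| := by
    calc |a| = |b + (a - b)| := by ring_nf
    _ ≤ |b| + |a - b| := abs_add_le _ _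
  have h2 : |a| ^ p ≤ |b| ^ p + |a - b| ^ p :=
    (Real.rpow_le_rpow (abs_nonneg _) h1 hp0).trans
      (rdb_rpow_subadd hp0 hp1 (abs_nonneg _) (abs_nonneg _))
  linarith

lemma rdb_dyadic_cover : Set.Ioi (1:ℝ) ⊆ ⋃ n : ℕ, Set.Ioc ((2:ℝ)^n) ((2:ℝ)^(n+1)) := by
  intro u hu
  have hu1 : (1:ℝ) < u := hu
  have hex : ∃ n : ℕ, u ≤ (2:ℝ)^(n+1) := by
    obtain ⟨m, hm⟩ := pow_unbounded_of_one_lt u (by norm_num : (1:ℝ) < 2)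
    exact ⟨m, le_of_lt (hm.trans_le (pow_le_pow_right₀ (by norm_num) (Nat.le_succ m)))⟩
  classical
  let n := Nat.find hex
  have hn2 : u ≤ (2:ℝ)^(n+1) := Nat.find_spec hex
  have hn1 : (2:ℝ)^n < u := by
    rcases Nat.eq_zero_or_pos n with h0 | h0
    · rw [h0]; simpa using hu1
    · have hmin := Nat.find_min hex (show n - 1 < n by omega)
      push_neg at hmin
      have he : n - 1 + 1 = n := by omega
      rwa [he] at hmin
  exact Set.mem_iUnion.2 ⟨n, hn1, hn2⟩

lemma rdb_tail_moment {α C₁ p : ℝ} (hα0 : 0 < α) (hC₁ : 0 < C₁) (hp0 : 0 ≤ p) (hpα : p < α)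
    (ν : Measure ℝ) (hν : ∀ r : ℝ, 0 < r → ν (Set.Ici r) ≤ ENNReal.ofReal (C₁ * r ^ (-α))) :
    ∫⁻ u in Set.Ioi (1:ℝ), ENNReal.ofReal (u ^ p) ∂ν ≤
      ENNReal.ofReal (C₁ * 2 ^ p * (1 - 2 ^ (p - α))⁻¹) := by
  set r : ℝ := (2:ℝ) ^ (p - α) with hr
  have hr0 : 0 < r := Real.rpow_pos_of_pos two_pos _
  have hr1 : r < 1 := Real.rpow_lt_one_of_one_lt_of_neg (by norm_num) (by linarith)
  have hshell : ∀ n : ℕ, ∫⁻ u in Set.Ioc ((2:ℝ)^n) ((2:ℝ)^(n+1)), ENNReal.ofReal (u ^ p) ∂ν ≤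
      ENNReal.ofReal (C₁ * 2 ^ p) * (ENNReal.ofReal r) ^ n := by
    intro n
    have ha : (0:ℝ) < (2:ℝ)^n := by positivity
    have hb : (0:ℝ) < (2:ℝ)^(n+1) := by positivity
    have h1 : ∫⁻ u in Set.Ioc ((2:ℝ)^n) ((2:ℝ)^(n+1)), ENNReal.ofReal (u ^ p) ∂ν ≤
        ∫⁻ _ in Set.Ioc ((2:ℝ)^n) ((2:ℝ)^(n+1)), ENNReal.ofReal (((2:ℝ)^(n+1)) ^ p) ∂ν := by
      apply setLIntegral_mono measurable_const
      intro x hx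
      exact ENNReal.ofReal_le_ofReal
        (Real.rpow_le_rpow (le_of_lt (ha.trans hx.1)) hx.2 hp0)
    rw [setLIntegral_const] at h1
    have h2 : ν (Set.Ioc ((2:ℝ)^n) ((2:ℝ)^(n+1))) ≤ ENNReal.ofReal (C₁ * ((2:ℝ)^n) ^ (-α)) :=
      (measure_mono (fun x hx => hx.1.le)).trans (hν _ ha)
    have h3 : (((2:ℝ)^(n+1)) ^ p) * (C₁ * ((2:ℝ)^n) ^ (-α)) = (C₁ * 2 ^ p) * r ^ n := by
      rw [hr, ← Real.rpow_natCast 2 n, ← Real.rpow_natCast 2 (n+1),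
        ← Real.rpow_natCast ((2:ℝ) ^ (p - α)) n,
        ← Real.rpow_mul (by norm_num : (0:ℝ) ≤ 2),
        ← Real.rpow_mul (by norm_num : (0:ℝ) ≤ 2),
        ← Real.rpow_mul (by norm_num : (0:ℝ) ≤ 2)]
      have haux : (2:ℝ) ^ ((↑(n+1):ℝ) * p) * (2:ℝ) ^ ((↑n:ℝ) * (-α)) =
          (2:ℝ) ^ p * (2:ℝ) ^ ((p - α) * (↑n:ℝ)) := by
        rw [← Real.rpow_add two_pos, ← Real.rpow_add two_pos]
        congr 1
        push_cast
        ring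
      linear_combination C₁ * haux
    calc ∫⁻ u in Set.Ioc ((2:ℝ)^n) ((2:ℝ)^(n+1)), ENNReal.ofReal (u ^ p) ∂ν
        ≤ ENNReal.ofReal (((2:ℝ)^(n+1)) ^ p) * ν (Set.Ioc ((2:ℝ)^n) ((2:ℝ)^(n+1))) := h1
      _ ≤ ENNReal.ofReal (((2:ℝ)^(n+1)) ^ p) * ENNReal.ofReal (C₁ * ((2:ℝ)^n) ^ (-α)) :=
          mul_le_mul_right h2 _
      _ = ENNReal.ofReal ((((2:ℝ)^(n+1)) ^ p) * (C₁ * ((2:ℝ)^n) ^ (-α))) :=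
          (ENNReal.ofReal_mul (by positivity)).symm
      _ = ENNReal.ofReal ((C₁ * 2 ^ p) * r ^ n) := by rw [h3]
      _ = ENNReal.ofReal (C₁ * 2 ^ p) * (ENNReal.ofReal r) ^ n := by
          rw [ENNReal.ofReal_mul (by positivity), ENNReal.ofReal_pow hr0.le]
  calc ∫⁻ u in Set.Ioi (1:ℝ), ENNReal.ofReal (u ^ p) ∂ν
      ≤ ∫⁻ u in ⋃ n : ℕ, Set.Ioc ((2:ℝ)^n) ((2:ℝ)^(n+1)), ENNReal.ofReal (u ^ p) ∂ν :=
        lintegral_mono_set rdb_dyadic_cover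
    _ ≤ ∑' n : ℕ, ∫⁻ u in Set.Ioc ((2:ℝ)^n) ((2:ℝ)^(n+1)), ENNReal.ofReal (u ^ p) ∂ν :=
        lintegral_iUnion_le _ _
    _ ≤ ∑' n : ℕ, ENNReal.ofReal (C₁ * 2 ^ p) * (ENNReal.ofReal r) ^ n :=
        ENNReal.tsum_le_tsum hshell
    _ = ENNReal.ofReal (C₁ * 2 ^ p) * (1 - ENNReal.ofReal r)⁻¹ := by
        rw [ENNReal.tsum_mul_left, ENNReal.tsum_geometric]
    _ = ENNReal.ofReal (C₁ * 2 ^ p * (1 - r)⁻¹) := by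
        rw [ENNReal.ofReal_mul (by positivity), ENNReal.ofReal_mul (by positivity),
          ENNReal.ofReal_inv_of_pos (by linarith), ENNReal.ofReal_sub 1 hr0.le,
          ENNReal.ofReal_one, ENNReal.ofReal_mul hC₁.le]

/-- Lemma A.3: for a `C³` mollification `F̂` of the response function
`F(y) = (1/(2-β))|y|^(2-β) sgn y` (coinciding with `F` for `|y| ≥ 1`),
with `α ∈ (0,2]`, `β ∈ (0,2)`, `α + β ≥ 2`, the symmetrized second difference of
`F̂'` against `ν` is uniformly bounded:
`|∫₀^∞ (F̂'(y+u)+F̂'(y-u)-2F̂'(y)) dν(u)| ≤ C`, uniformly over Lévy-type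
measures `ν` on `(0,∞)` with `ν([r,∞)) ≤ C₁ r^(-α)` and `∫(u²∧1)dν ≤ C₂`. -/
theorem remainder_derivative_bound
    (α β C₁ C₂ : ℝ) (hα : α ∈ Set.Ioc (0:ℝ) 2) (hβ : β ∈ Set.Ioo (0:ℝ) 2)
    (hαβ : 2 ≤ α + β) (hC₁ : 0 < C₁) (hC₂ : 0 < C₂)
    (Fhat : ℝ → ℝ) (hFs : ContDiff ℝ 3 Fhat)
    (hFeq : ∀ y : ℝ, 1 ≤ |y| →
      Fhat y = (1 / (2 - β)) * |y| ^ (2 - β) * Real.sign y) :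
    ∃ C : ℝ, 0 < C ∧
      ∀ ν : Measure ℝ, ν (Set.Ioi (0:ℝ))ᶜ = 0 →
        (∀ r : ℝ, 0 < r → ν (Set.Ici r) ≤ ENNReal.ofReal (C₁ * r ^ (-α))) →
        (∫⁻ u, ENNReal.ofReal (min (u ^ 2) 1) ∂ν) ≤ ENNReal.ofReal C₂ →
        ∀ y : ℝ,
          Integrable
            (fun u => deriv Fhat (y + u) + deriv Fhat (y - u) - 2 * deriv Fhat y) ν ∧
          |∫ u, (deriv Fhat (y + u) + deriv Fhat (y - u) - 2 * deriv Fhat y) ∂ν|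
            ≤ C := by
  obtain ⟨hα0, hα2⟩ := hα
  obtain ⟨hβ0, hβ2⟩ := hβ
  -- regularity
  rw [show (3 : WithTop ℕ∞) = 2 + 1 by norm_num, contDiff_succ_iff_deriv] at hFs
  obtain ⟨hd1, -, hFs'⟩ := hFs
  rw [show (2 : WithTop ℕ∞) = 1 + 1 by norm_num, contDiff_succ_iff_deriv] at hFs'
  obtain ⟨hd2, -, hFs''⟩ := hFs'
  rw [contDiff_one_iff_deriv] at hFs''
  obtain ⟨hd3, hc3⟩ := hFs''
  set F1 := deriv Fhat with hF1def
  set F2 := deriv F1 with hF2def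
  set F3 := deriv F2 with hF3def
  -- derivative formulas
  have hF1p : ∀ z : ℝ, 1 < z → F1 z = z ^ (1 - β) := fun z hz => rdb_deriv_pos hβ2 hFeq hz
  have hF1n : ∀ z : ℝ, z < -1 → F1 z = (-z) ^ (1 - β) := fun z hz => rdb_deriv_neg hβ2 hFeq hz
  have hF2p : ∀ z : ℝ, 1 < z → F2 z = (1 - β) * z ^ (-β) := by
    intro z hz
    have := rdb_gderiv_pos (g := F1) (c := 1) (a := 1 - β)
      (fun w hw => by rw [hF1p w hw, one_mul]) hz
    rw [hF2def, this, one_mul, show (1:ℝ) - β - 1 = -β by ring]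
  have hF2n : ∀ z : ℝ, z < -1 → F2 z = -(1 - β) * (-z) ^ (-β) := by
    intro z hz
    have := rdb_gderiv_neg (g := F1) (c := 1) (a := 1 - β)
      (fun w hw => by rw [hF1n w hw, one_mul]) hz
    rw [hF2def, this, show (1:ℝ) - β - 1 = -β by ring]; ring
  have hF3p : ∀ z : ℝ, 1 < z → F3 z = (1 - β) * ((-β) * z ^ (-β - 1)) := by
    intro z hz
    have := rdb_gderiv_pos (g := F2) (c := 1 - β) (a := -β) (fun w hw => hF2p w hw) hz
    rw [hF3def, this]
  have hF3n : ∀ z : ℝ, z < -1 → F3 z = -(-(1 - β) * ((-β) * (-z) ^ (-β - 1))) := by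
    intro z hz
    have := rdb_gderiv_neg (g := F2) (c := -(1 - β)) (a := -β) (fun w hw => hF2n w hw) hz
    rw [hF3def, this]
  -- global bound on F3
  obtain ⟨B₃, hB₃⟩ := isCompact_Icc.exists_bound_of_continuousOn
    (s := Set.Icc (-1:ℝ) 1) hc3.continuousOn
  set M₃ : ℝ := max B₃ 2 with hM₃def
  have hM₃2 : (2:ℝ) ≤ M₃ := le_max_right _ _
  have hM₃pos : (0:ℝ) < M₃ := by linarith
  have hkey3 : ∀ w : ℝ, 1 < w → |(1 - β) * ((-β) * w ^ (-β - 1))| ≤ 2 := by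
    intro w hw
    have he : 0 < w ^ (-β - 1) := Real.rpow_pos_of_pos (by linarith) _
    have he1 : w ^ (-β - 1) ≤ 1 := Real.rpow_le_one_of_one_le_of_nonpos hw.le (by linarith)
    have habs1β : |1 - β| ≤ 1 := by rw [abs_le]; constructor <;> linarith
    rw [abs_mul, abs_mul, abs_neg, abs_of_pos hβ0, abs_of_pos he]
    have hX : β * w ^ (-β - 1) ≤ 2 := by nlinarith
    have hX0 : 0 ≤ β * w ^ (-β - 1) := by positivity
    calc |1 - β| * (β * w ^ (-β - 1)) ≤ 1 * (β * w ^ (-β - 1)) :=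
          mul_le_mul_of_nonneg_right habs1β hX0
      _ ≤ 2 := by linarith
  have hM₃ : ∀ z : ℝ, |F3 z| ≤ M₃ := by
    intro z
    rcases le_or_gt (|z|) 1 with h | h
    · exact (hB₃ z (abs_le.mp h)).trans (le_max_left _ _)
    · rcases lt_abs.mp h with hz | hz
      · rw [hF3p z hz]; exact (hkey3 z hz).trans hM₃2
      · have hz' : z < -1 := by linarith
        rw [hF3n z hz', abs_neg, neg_mul, abs_neg]
        exact (hkey3 (-z) (by linarith)).trans hM₃2
  -- second-order (small u) bound
  have hsmall : ∀ (y u : ℝ), 0 ≤ u →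
      |F1 (y + u) + F1 (y - u) - 2 * F1 y| ≤ 2 * M₃ * u ^ 2 := by
    intro y u hu
    set h : ℝ → ℝ := fun t => F1 (y + t) + F1 (y - t) with hhdef
    have hh : ∀ t : ℝ, HasDerivAt h (F2 (y + t) - F2 (y - t)) t := by
      intro t
      have ha : HasDerivAt (fun t : ℝ => y + t) 1 t := by
        simpa using (hasDerivAt_id t).const_add y
      have hb : HasDerivAt (fun t : ℝ => y - t) (-1) t := by
        exact (hasDerivAt_id t).const_sub y
      have h1 : HasDerivAt (fun t : ℝ => F1 (y + t)) (F2 (y + t) * 1) t :=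
        ((hd2 (y + t)).hasDerivAt).comp t ha
      have h2 : HasDerivAt (fun t : ℝ => F1 (y - t)) (F2 (y - t) * (-1)) t :=
        ((hd2 (y - t)).hasDerivAt).comp t hb
      rw [hhdef]
      exact (h1.add h2).congr_deriv (by ring)
    have hF2lip : ∀ a b : ℝ, |F2 a - F2 b| ≤ M₃ * |a - b| := by
      intro a b
      have := Convex.norm_image_sub_le_of_norm_deriv_le (f := F2) (C := M₃)
        (fun x _ => (hd3 x)) (fun x _ => hM₃ x) convex_univ (Set.mem_univ b) (Set.mem_univ a)
      simpa [Real.norm_eq_abs] using this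
    have hderb : ∀ t ∈ Set.Icc (0:ℝ) u, ‖deriv h t‖ ≤ 2 * M₃ * u := by
      intro t ht
      rw [(hh t).deriv, Real.norm_eq_abs]
      calc |F2 (y + t) - F2 (y - t)| ≤ M₃ * |(y + t) - (y - t)| := hF2lip _ _
        _ = M₃ * (2 * t) := by rw [show (y + t) - (y - t) = 2 * t by ring,
              abs_of_nonneg (by linarith [ht.1] : (0:ℝ) ≤ 2 * t)]
        _ ≤ 2 * M₃ * u := by nlinarith [ht.2, ht.1]
    have := Convex.norm_image_sub_le_of_norm_deriv_le (f := h) (C := 2 * M₃ * u)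
      (fun x _ => (hh x).differentiableAt) hderb (convex_Icc 0 u)
      (Set.left_mem_Icc.mpr hu) (Set.right_mem_Icc.mpr hu)
    have h0 : h 0 = 2 * F1 y := by simp [hhdef]; ring
    rw [Real.norm_eq_abs, Real.norm_eq_abs, h0, sub_zero, abs_of_nonneg hu] at this
    calc |F1 (y + u) + F1 (y - u) - 2 * F1 y| = |h u - 2 * F1 y| := by rfl
      _ ≤ 2 * M₃ * u * u := this
      _ = 2 * M₃ * u ^ 2 := by ring
  -- large u bound
  set p : ℝ := max (1 - β) 0 with hpdef
  have hp0 : 0 ≤ p := le_max_right _ _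
  have hp1 : p ≤ 1 := max_le (by linarith) zero_le_one
  have hpα : p < α := max_lt (by linarith) hα0
  obtain ⟨K, hKpos, hlarge⟩ : ∃ K : ℝ, 0 < K ∧ ∀ (y u : ℝ), 1 ≤ u →
      |F1 (y + u) + F1 (y - u) - 2 * F1 y| ≤ K * u ^ p := by
    rcases le_or_gt 1 β with hβ1 | hβ1
    · -- β ≥ 1 : F1 globally bounded
      obtain ⟨B₁, hB₁⟩ := isCompact_Icc.exists_bound_of_continuousOn
        (s := Set.Icc (-1:ℝ) 1) hd2.continuous.continuousOn
      set M₁ : ℝ := max B₁ 1 with hM₁def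
      have hM₁ : ∀ z : ℝ, |F1 z| ≤ M₁ := by
        intro z
        rcases le_or_gt (|z|) 1 with h | h
        · exact (hB₁ z (abs_le.mp h)).trans (le_max_left _ _)
        · rcases lt_abs.mp h with hz | hz
          · rw [hF1p z hz, abs_of_pos (Real.rpow_pos_of_pos (by linarith) _)]
            exact (Real.rpow_le_one_of_one_le_of_nonpos hz.le (by linarith)).trans
              (le_max_right _ _)
          · rw [hF1n z (by linarith), abs_of_pos (Real.rpow_pos_of_pos (by linarith) _)]
            exact (Real.rpow_le_one_of_one_le_of_nonpos (by linarith) (by linarith)).trans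
              (le_max_right _ _)
      have hM₁pos : (0:ℝ) < M₁ := lt_of_lt_of_le one_pos (le_max_right _ _)
      refine ⟨4 * M₁, by linarith, fun y u hu => ?_⟩
      have hup : 1 ≤ u ^ p := by
        have := Real.rpow_le_rpow_of_exponent_le hu hp0
        rwa [Real.rpow_zero] at this
      calc |F1 (y + u) + F1 (y - u) - 2 * F1 y|
          ≤ |F1 (y + u)| + |F1 (y - u)| + 2 * |F1 y| := by
            have := abs_add_le (F1 (y + u) + F1 (y - u)) (-(2 * F1 y))
            simp only [abs_neg, abs_mul, abs_two] at this
            calc |F1 (y + u) + F1 (y - u) - 2 * F1 y|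
                ≤ |F1 (y + u) + F1 (y - u)| + 2 * |F1 y| := by
                  simpa [sub_eq_add_neg] using this
              _ ≤ |F1 (y + u)| + |F1 (y - u)| + 2 * |F1 y| := by
                  linarith [abs_add_le (F1 (y + u)) (F1 (y - u))]
        _ ≤ 4 * M₁ := by linarith [hM₁ (y + u), hM₁ (y - u), hM₁ y]
        _ ≤ 4 * M₁ * u ^ p := by nlinarith
    · -- β < 1 : Hölder estimate
      have hq0 : 0 < 1 - β := by linarith
      have hpeq : p = 1 - β := max_eq_left (by linarith)
      have hGcont : Continuous (fun v : ℝ => F1 v - |v| ^ (1 - β)) :=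
        hd2.continuous.sub (continuous_abs.rpow_const (fun v => Or.inr hq0.le))
      obtain ⟨D, hD⟩ := isCompact_Icc.exists_bound_of_continuousOn
        (s := Set.Icc (-1:ℝ) 1) hGcont.continuousOn
      set D' : ℝ := max D 0 with hD'def
      have hD'0 : 0 ≤ D' := le_max_right _ _
      have hDall : ∀ v : ℝ, |F1 v - |v| ^ (1 - β)| ≤ D' := by
        intro v
        rcases le_or_gt (|v|) 1 with h | h
        · exact (hD v (abs_le.mp h)).trans (le_max_left _ _)
        · rcases lt_abs.mp h with hv | hv
          · rw [hF1p v hv, abs_of_pos (by linarith : (0:ℝ) < v), sub_self, abs_zero]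
            exact hD'0
          · rw [hF1n v (by linarith), abs_of_neg (by linarith : v < 0), sub_self, abs_zero]
            exact hD'0
      have hHold : ∀ a b : ℝ, |F1 a - F1 b| ≤ |a - b| ^ (1 - β) + 2 * D' := by
        intro a b
        have h1 := hDall a
        have h2 := hDall b
        have h3 : |(|a| ^ (1 - β)) - (|b| ^ (1 - β))| ≤ |a - b| ^ (1 - β) := by
          rw [abs_le]
          constructor
          · have := rdb_abs_rpow_sub hq0.le (by linarith) b a
            rw [show b - a = -(a - b) by ring, abs_neg] at this
            linarith
          · exact rdb_abs_rpow_sub hq0.le (by linarith) a b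
        calc |F1 a - F1 b|
            = |(F1 a - |a| ^ (1 - β)) + ((|a| ^ (1 - β)) - (|b| ^ (1 - β)))
                + ((|b| ^ (1 - β)) - F1 b)| := by ring_nf
          _ ≤ |F1 a - |a| ^ (1 - β)| + |(|a| ^ (1 - β)) - (|b| ^ (1 - β))|
                + |(|b| ^ (1 - β)) - F1 b| := abs_add_three _ _ _
          _ ≤ D' + |a - b| ^ (1 - β) + D' := by
              have : |(|b| ^ (1 - β)) - F1 b| = |F1 b - |b| ^ (1 - β)| := abs_sub_comm _ _
              rw [this]; linarith
          _ = |a - b| ^ (1 - β) + 2 * D' := by ring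
      refine ⟨2 + 4 * D', by linarith, fun y u hu => ?_⟩
      have hup : 1 ≤ u ^ p := by
        have := Real.rpow_le_rpow_of_exponent_le hu hp0
        rwa [Real.rpow_zero] at this
      have e1 : |F1 (y + u) - F1 y| ≤ u ^ (1 - β) + 2 * D' := by
        have := hHold (y + u) y
        rwa [show y + u - y = u by ring, abs_of_nonneg (show (0:ℝ) ≤ u by linarith)] at this
      have e2 : |F1 (y - u) - F1 y| ≤ u ^ (1 - β) + 2 * D' := by
        have := hHold (y - u) y
        rwa [show y - u - y = -u by ring, abs_neg, abs_of_nonneg (show (0:ℝ) ≤ u by linarith)] at this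
      calc |F1 (y + u) + F1 (y - u) - 2 * F1 y|
          = |(F1 (y + u) - F1 y) + (F1 (y - u) - F1 y)| := by ring_nf
        _ ≤ |F1 (y + u) - F1 y| + |F1 (y - u) - F1 y| := abs_add_le _ _
        _ ≤ 2 * u ^ (1 - β) + 4 * D' := by linarith
        _ ≤ (2 + 4 * D') * u ^ p := by rw [hpeq] at hup ⊢; nlinarith [hup, hD'0]
  -- the constant
  have h2p : (0:ℝ) < 2 ^ (p - α) := Real.rpow_pos_of_pos two_pos _
  have h2p1 : (2:ℝ) ^ (p - α) < 1 :=
    Real.rpow_lt_one_of_one_lt_of_neg (by norm_num) (by linarith)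
  set T : ℝ := C₁ * 2 ^ p * (1 - 2 ^ (p - α))⁻¹ with hTdef
  have hTpos : 0 < T := by
    apply mul_pos (mul_pos hC₁ (Real.rpow_pos_of_pos two_pos _))
    exact inv_pos.mpr (by linarith)
  refine ⟨2 * M₃ * C₂ + K * T, by positivity, ?_⟩
  intro ν hν0 hνtail hνC₂ y
  set g : ℝ → ℝ := fun u => F1 (y + u) + F1 (y - u) - 2 * F1 y with hgdef
  have hgc : Continuous g := by
    apply Continuous.sub
    · exact (hd2.continuous.comp (continuous_const.add continuous_id)).add
        (hd2.continuous.comp (continuous_const.sub continuous_id))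
    · exact continuous_const
  set ψ : ℝ → ℝ≥0∞ := fun u => ENNReal.ofReal (2 * M₃ * min (u ^ 2) 1) +
      (Set.Ioi (1:ℝ)).indicator (fun u => ENNReal.ofReal (K * u ^ p)) u with hψdef
  have hae : ∀ᵐ u ∂ν, ENNReal.ofReal ‖g u‖ ≤ ψ u := by
    rw [MeasureTheory.ae_iff]
    refine measure_mono_null ?_ hν0
    intro u hu
    simp only [Set.mem_setOf_eq, not_le] at hu
    simp only [Set.mem_compl_iff, Set.mem_Ioi, not_lt]
    by_contra hcon
    push_neg at hcon
    apply absurd hu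
    push_neg
    rcases le_or_gt u 1 with h1 | h1
    · have hb := hsmall y u hcon.le
      have hmin : min (u ^ 2) 1 = u ^ 2 := min_eq_left (by nlinarith)
      calc ENNReal.ofReal ‖g u‖ ≤ ENNReal.ofReal (2 * M₃ * min (u ^ 2) 1) := by
            rw [hmin]
            exact ENNReal.ofReal_le_ofReal (by rwa [Real.norm_eq_abs])
        _ ≤ ψ u := le_self_add
    · have hb := hlarge y u h1.le
      have hind : (Set.Ioi (1:ℝ)).indicator (fun u => ENNReal.ofReal (K * u ^ p)) u
          = ENNReal.ofReal (K * u ^ p) := Set.indicator_of_mem h1 _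
      calc ENNReal.ofReal ‖g u‖ ≤ ENNReal.ofReal (K * u ^ p) :=
            ENNReal.ofReal_le_ofReal (by rwa [Real.norm_eq_abs])
        _ = (Set.Ioi (1:ℝ)).indicator (fun u => ENNReal.ofReal (K * u ^ p)) u := hind.symm
        _ ≤ ψ u := le_add_self
  have hmeas1 : Measurable fun u : ℝ => ENNReal.ofReal (min (u ^ 2) 1) :=
    ENNReal.measurable_ofReal.comp (((continuous_pow 2).min continuous_const).measurable)
  have hmeasp : Measurable fun u : ℝ => ENNReal.ofReal (u ^ p) :=
    ENNReal.measurable_ofReal.comp (Real.continuous_rpow_const hp0).measurable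
  have hlint : ∫⁻ u, ENNReal.ofReal ‖g u‖ ∂ν ≤ ENNReal.ofReal (2 * M₃ * C₂ + K * T) := by
    calc ∫⁻ u, ENNReal.ofReal ‖g u‖ ∂ν ≤ ∫⁻ u, ψ u ∂ν := lintegral_mono_ae hae
      _ = (∫⁻ u, ENNReal.ofReal (2 * M₃ * min (u ^ 2) 1) ∂ν) +
          ∫⁻ u, (Set.Ioi (1:ℝ)).indicator (fun u => ENNReal.ofReal (K * u ^ p)) u ∂ν := by
          rw [hψdef]
          exact lintegral_add_left
            ((ENNReal.measurable_ofReal.comp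
              ((continuous_const.mul ((continuous_pow 2).min continuous_const)).measurable))) _
      _ ≤ ENNReal.ofReal (2 * M₃ * C₂) + ENNReal.ofReal (K * T) := by
          gcongr
          · calc ∫⁻ u, ENNReal.ofReal (2 * M₃ * min (u ^ 2) 1) ∂ν
                = ∫⁻ u, ENNReal.ofReal (2 * M₃) * ENNReal.ofReal (min (u ^ 2) 1) ∂ν := by
                  congr 1; funext u
                  rw [← ENNReal.ofReal_mul (by positivity)]
              _ = ENNReal.ofReal (2 * M₃) * ∫⁻ u, ENNReal.ofReal (min (u ^ 2) 1) ∂ν :=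
                  lintegral_const_mul _ hmeas1
              _ ≤ ENNReal.ofReal (2 * M₃) * ENNReal.ofReal C₂ := mul_le_mul_right hνC₂ _
              _ = ENNReal.ofReal (2 * M₃ * C₂) := (ENNReal.ofReal_mul (by positivity)).symm
          · calc ∫⁻ u, (Set.Ioi (1:ℝ)).indicator (fun u => ENNReal.ofReal (K * u ^ p)) u ∂ν
                = ∫⁻ u in Set.Ioi (1:ℝ), ENNReal.ofReal (K * u ^ p) ∂ν :=
                  lintegral_indicator measurableSet_Ioi _
              _ = ∫⁻ u in Set.Ioi (1:ℝ), ENNReal.ofReal K * ENNReal.ofReal (u ^ p) ∂ν := by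
                  congr 1; funext u
                  rw [← ENNReal.ofReal_mul hKpos.le]
              _ = ENNReal.ofReal K * ∫⁻ u in Set.Ioi (1:ℝ), ENNReal.ofReal (u ^ p) ∂ν :=
                  lintegral_const_mul _ hmeasp
              _ ≤ ENNReal.ofReal K * ENNReal.ofReal T :=
                  mul_le_mul_right (rdb_tail_moment hα0 hC₁ hp0 hpα ν hνtail) _
              _ = ENNReal.ofReal (K * T) := (ENNReal.ofReal_mul hKpos.le).symm
      _ = ENNReal.ofReal (2 * M₃ * C₂ + K * T) :=
          (ENNReal.ofReal_add (by positivity) (by positivity)).symm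
  have hint : Integrable g ν := by
    refine ⟨hgc.aestronglyMeasurable, ?_⟩
    rw [MeasureTheory.hasFiniteIntegral_iff_norm]
    exact lt_of_le_of_lt hlint ENNReal.ofReal_lt_top
  refine ⟨hint, ?_⟩
  have hnorm := MeasureTheory.norm_integral_le_lintegral_norm (μ := ν) g
  rw [Real.norm_eq_abs] at hnorm
  exact hnorm.trans (ENNReal.toReal_le_of_le_ofReal (by positivity) hlint)
end

section
/- Let β ∈ (1,2). Then for all y₁, y₂ ∈ ℝ, (|y₁|^β sgn y₁ − |y₂|^β sgn y₂) · sgn(y₁ − y₂) ≥ 2^{−β} |y₁ − y₂|^β. -/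
open Set

lemma superadd_rpow {x y p : ℝ} (hx : 0 ≤ x) (hy : 0 ≤ y) (hp : 1 ≤ p) :
    x ^ p + y ^ p ≤ (x + y) ^ p := by
  have h := NNReal.add_rpow_le_rpow_add (⟨x, hx⟩ : NNReal) (⟨y, hy⟩ : NNReal) hp
  have := (NNReal.coe_le_coe).2 h
  exact_mod_cast this

lemma mono_case {β x y : ℝ} (hβ : 1 ≤ β) (hy : 0 ≤ y) (hxy : y ≤ x) :
    (x - y) ^ β ≤ x ^ β - y ^ β := by
  have h := superadd_rpow hy (by linarith : (0:ℝ) ≤ x - y) hβ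
  have : y + (x - y) = x := by ring
  rw [this] at h
  linarith

lemma fzero {β : ℝ} (hβ : 0 < β) (y : ℝ) (hy : 0 ≤ y) :
    |y| ^ β * Real.sign y = y ^ β := by
  rcases eq_or_lt_of_le hy with h | h
  · simp [← h, Real.sign_zero, Real.zero_rpow hβ.ne']
  · rw [Real.sign_of_pos h, abs_of_pos h, mul_one]

lemma fneg {β : ℝ} (hβ : 0 < β) (y : ℝ) (hy : y ≤ 0) :
    |y| ^ β * Real.sign y = -((-y) ^ β) := by
  rcases eq_or_lt_of_le hy with h | h
  · simp [h, Real.sign_zero, Real.zero_rpow hβ.ne']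
  · rw [Real.sign_of_neg h, abs_of_neg h, mul_neg_one]

lemma key_lemma {β : ℝ} (hβ1 : 1 < β) (a b : ℝ) (hab : b < a) :
    (2:ℝ) ^ (-β) * (a - b) ^ β ≤ |a| ^ β * Real.sign a - |b| ^ β * Real.sign b := by
  have hβ0 : (0:ℝ) < β := by linarith
  have hd : (0:ℝ) < a - b := by linarith
  have hhalf : (2:ℝ) ^ (-β) * (a - b) ^ β = ((a - b) / 2) ^ β := by
    rw [Real.div_rpow hd.le (by norm_num : (0:ℝ) ≤ 2), Real.rpow_neg (by norm_num : (0:ℝ) ≤ 2)]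
    ring
  rw [hhalf]
  rcases le_or_gt 0 b with hb | hb
  · -- 0 ≤ b < a
    have ha : 0 ≤ a := by linarith
    rw [fzero hβ0 a ha, fzero hβ0 b hb]
    have h1 : ((a - b) / 2) ^ β ≤ (a - b) ^ β :=
      Real.rpow_le_rpow (by linarith) (by linarith) hβ0.le
    have h2 := mono_case hβ1.le hb hab.le
    linarith
  · rcases le_or_gt a 0 with ha | ha
    · -- b < a ≤ 0
      rw [fneg hβ0 a ha, fneg hβ0 b hb.le]
      have h1 : ((a - b) / 2) ^ β ≤ (a - b) ^ β :=
        Real.rpow_le_rpow (by linarith) (by linarith) hβ0.le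
      have h2 := mono_case hβ1.le (by linarith : (0:ℝ) ≤ -a) (by linarith : -a ≤ -b)
      have : -b - -a = a - b := by ring
      rw [this] at h2
      linarith
    · -- b < 0 < a
      rw [fzero hβ0 a ha.le, fneg hβ0 b hb.le]
      have hbpos : 0 ≤ (-b) ^ β := Real.rpow_nonneg (by linarith) β
      have hapos : 0 ≤ a ^ β := Real.rpow_nonneg ha.le β
      rcases le_or_gt ((a - b) / 2) a with hc | hc
      · have : ((a - b) / 2) ^ β ≤ a ^ β :=
          Real.rpow_le_rpow (by linarith) hc hβ0.le
        linarith
      · have : ((a - b) / 2) ^ β ≤ (-b) ^ β :=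
          Real.rpow_le_rpow (by linarith) (by linarith) hβ0.le
        linarith

/-- Global dissipativity of the odd power drift for `β ∈ (1,2)`:
`(|y₁|^β sgn y₁ - |y₂|^β sgn y₂) sgn(y₁-y₂) ≥ 2^(-β) |y₁-y₂|^β`. -/
theorem power_drift_dissipativity
    (β : ℝ) (hβ : β ∈ Set.Ioo (1:ℝ) 2) (y₁ y₂ : ℝ) :
    (|y₁| ^ β * Real.sign y₁ - |y₂| ^ β * Real.sign y₂) * Real.sign (y₁ - y₂)
      ≥ (2:ℝ) ^ (-β) * |y₁ - y₂| ^ β := by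
  obtain ⟨hβ1, hβ2⟩ := hβ
  rcases lt_trichotomy y₁ y₂ with h | h | h
  · have hd : y₁ - y₂ < 0 := by linarith
    rw [Real.sign_of_neg hd, abs_of_neg hd]
    have := key_lemma hβ1 y₂ y₁ h
    have habs : -(y₁ - y₂) = y₂ - y₁ := by ring
    rw [habs]
    nlinarith [this]
  · simp [h, Real.sign_zero, Real.zero_rpow (by linarith : β ≠ 0)]
  · have hd : 0 < y₁ - y₂ := by linarith
    rw [Real.sign_of_pos hd, abs_of_pos hd, mul_one]
    exact key_lemma hβ1 y₁ y₂ h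
end

section
/- Let α ∈ (0,2), β < 2 and c > 0. Let μ be the measure on ℝ with density z ↦ c|z|^{−α−1} with respect to Lebesgue measure (interpreted on ℝ∖{0}), let F(z) = (1/(2−β))|z|^{2−β} sgn z, and set α_X = α/(2−β) and c_X = c(2−β)^{−(α_X+1)}. Then the pushforward of μ under F is the measure on ℝ with density w ↦ c_X|w|^{−α_X−1} with respect to Lebesgue measure. -/
open Set MeasureTheory
open scoped ENNReal

private lemma lintegral_image_eq_lintegral_abs_deriv_mul' {s : Set ℝ} {f f' : ℝ → ℝ}
    (hs : MeasurableSet s) (hf' : ∀ x ∈ s, HasDerivWithinAt f (f' x) s x)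
    (hf : InjOn f s) (g : ℝ → ℝ≥0∞) :
    ∫⁻ x in f '' s, g x = ∫⁻ x in s, ENNReal.ofReal |f' x| * g (f x) := by
  simpa only [ContinuousLinearMap.det_toSpanSingleton] using
    lintegral_image_eq_lintegral_abs_det_fderiv_mul volume hs
      (fun x hx => (hf' x hx).hasFDerivWithinAt) hf g

private lemma real_sign_mul_abs (w : ℝ) : Real.sign w * |w| = w := by
  rcases lt_trichotomy w 0 with h | rfl | h
  · rw [Real.sign_of_neg h, abs_of_neg h]; ring
  · simp
  · rw [Real.sign_of_pos h, abs_of_pos h]; ring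

private lemma real_abs_sign (w : ℝ) (hw : w ≠ 0) : |Real.sign w| = 1 := by
  rcases Real.sign_apply_eq_of_ne_zero w hw with h | h <;> rw [h] <;> norm_num

/-- The non-linear filter `F(z) = (1/(2-β))|z|^(2-β) sgn z` maps the symmetric
`α`-stable Lévy measure with density `c|z|^(-α-1)` to the symmetric
`α_X`-stable Lévy measure with density `c_X|w|^(-α_X-1)`, where
`α_X = α/(2-β)` and `c_X = c(2-β)^(-(α_X+1))`. -/
theorem stable_levy_measure_pushforward
    (α β c : ℝ) (hα : α ∈ Set.Ioo (0:ℝ) 2) (hβ : β < 2) (hc : 0 < c) :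
    Measure.map (fun z : ℝ => (1 / (2 - β)) * |z| ^ (2 - β) * Real.sign z)
        (volume.withDensity (fun z : ℝ => ENNReal.ofReal (c * |z| ^ (-α - 1))))
      = volume.withDensity (fun w : ℝ =>
          ENNReal.ofReal
            ((c * (2 - β) ^ (-(α / (2 - β)) - 1)) * |w| ^ (-(α / (2 - β)) - 1))) := by
  have h2β : (0:ℝ) < 2 - β := by linarith
  set F : ℝ → ℝ := fun z : ℝ => (1 / (2 - β)) * |z| ^ (2 - β) * Real.sign z with hF
  -- measurability of the sign function and of `F`
  have hsign : Measurable Real.sign := by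
    have : (Real.sign : ℝ → ℝ) = fun r => if r < 0 then -1 else if 0 < r then 1 else 0 :=
      funext fun r => rfl
    rw [this]
    exact Measurable.ite measurableSet_Iio measurable_const
      (Measurable.ite measurableSet_Ioi measurable_const measurable_const)
  have hFm : Measurable F := by
    apply Measurable.mul _ hsign
    exact measurable_const.mul
      ((continuous_abs.rpow_const (fun x => Or.inr h2β.le)).measurable)
  -- the absolute value of `F`
  have hFabs : ∀ z : ℝ, z ≠ 0 → |F z| = (1 / (2 - β)) * |z| ^ (2 - β) := by
    intro z hz
    rw [hF]
    simp only []
    rw [abs_mul, abs_mul, real_abs_sign z hz, mul_one,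
      abs_of_pos (show (0:ℝ) < 1 / (2 - β) by positivity),
      abs_of_nonneg (Real.rpow_nonneg (abs_nonneg z) _)]
  have hFne : ∀ z : ℝ, z ≠ 0 → F z ≠ 0 := by
    intro z hz h
    have h1 := hFabs z hz
    rw [h, abs_zero] at h1
    have h2 : (0:ℝ) < (1 / (2 - β)) * |z| ^ (2 - β) :=
      mul_pos (by positivity) (Real.rpow_pos_of_pos (abs_pos.mpr hz) _)
    linarith
  -- key pointwise identity
  have key : ∀ z : ℝ, z ≠ 0 →
      |z| ^ (1 - β) * ((c * (2 - β) ^ (-(α / (2 - β)) - 1)) * |F z| ^ (-(α / (2 - β)) - 1))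
        = c * |z| ^ (-α - 1) := by
    intro z hz
    have hzp : (0:ℝ) < |z| := abs_pos.mpr hz
    rw [hFabs z hz,
      Real.mul_rpow (by positivity) (Real.rpow_nonneg (abs_nonneg z) _),
      ← Real.rpow_mul (abs_nonneg z),
      one_div, Real.inv_rpow h2β.le, ← Real.rpow_neg h2β.le,
      show (2 - β) * (-(α / (2 - β)) - 1) = -α - (2 - β) by field_simp]
    calc |z| ^ (1 - β) *
          (c * (2 - β) ^ (-(α / (2 - β)) - 1) *
            ((2 - β) ^ (-(-(α / (2 - β)) - 1)) * |z| ^ (-α - (2 - β))))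
        = c * ((2 - β) ^ (-(α / (2 - β)) - 1) * (2 - β) ^ (-(-(α / (2 - β)) - 1))) *
            (|z| ^ (1 - β) * |z| ^ (-α - (2 - β))) := by ring
      _ = c * |z| ^ (-α - 1) := by
          rw [← Real.rpow_add h2β, add_neg_cancel, Real.rpow_zero, mul_one,
            ← Real.rpow_add hzp, show (1 - β) + (-α - (2 - β)) = -α - 1 by ring]
  -- prove equality of measures on each measurable set
  refine Measure.ext fun s hs => ?_
  rw [Measure.map_apply hFm hs, withDensity_apply _ (hFm hs), withDensity_apply _ hs]
  have hres : ∀ A : Set ℝ, (volume : Measure ℝ).restrict (A \ {0}) = volume.restrict A :=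
    fun A => Measure.restrict_congr_set
      (diff_ae_eq_self.mpr (measure_mono_null inter_subset_right (measure_singleton 0)))
  rw [← hres (F ⁻¹' s), ← hres s]
  set t : Set ℝ := F ⁻¹' s \ {0} with ht_def
  have ht : MeasurableSet t := (hFm hs).diff (measurableSet_singleton 0)
  -- the image identity
  have himg : F '' t = s \ {0} := by
    apply Subset.antisymm
    · rintro w ⟨z, ⟨hzs, hz0⟩, rfl⟩
      exact ⟨hzs, by simpa using hFne z (by simpa using hz0)⟩
    · rintro w ⟨hws, hw0'⟩
      have hw0 : w ≠ 0 := by simpa using hw0'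
      set z : ℝ := Real.sign w * ((2 - β) * |w|) ^ (2 - β)⁻¹ with hz
      have hr : (0:ℝ) < ((2 - β) * |w|) ^ (2 - β)⁻¹ :=
        Real.rpow_pos_of_pos (mul_pos h2β (abs_pos.mpr hw0)) _
      have hz0 : z ≠ 0 :=
        mul_ne_zero (fun h => hw0 (Real.sign_eq_zero_iff.mp h)) hr.ne'
      have hzabs : |z| = ((2 - β) * |w|) ^ (2 - β)⁻¹ := by
        rw [hz, abs_mul, real_abs_sign w hw0, one_mul, abs_of_pos hr]
      have hsz : Real.sign z = Real.sign w := by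
        rcases lt_or_gt_of_ne hw0 with hw | hw
        · have hzneg : z < 0 := by rw [hz, Real.sign_of_neg hw]; linarith
          rw [Real.sign_of_neg hzneg, Real.sign_of_neg hw]
        · have hzpos : 0 < z := by rw [hz, Real.sign_of_pos hw]; linarith
          rw [Real.sign_of_pos hzpos, Real.sign_of_pos hw]
      have hFz : F z = w := by
        have h1 : |z| ^ (2 - β) = (2 - β) * |w| := by
          rw [hzabs, Real.rpow_inv_rpow (by positivity) h2β.ne']
        rw [hF]
        simp only []
        rw [h1, hsz,
          show 1 / (2 - β) * ((2 - β) * |w|) * Real.sign w = Real.sign w * |w| by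
            field_simp,
          real_sign_mul_abs]
      exact ⟨z, ⟨by rw [mem_preimage, hFz]; exact hws, by simpa using hz0⟩, hFz⟩
  -- injectivity of `F` on `t`
  have hinj : InjOn F t := by
    intro a ha b hb hab
    have ha0 : a ≠ 0 := by simpa using ha.2
    have hb0 : b ≠ 0 := by simpa using hb.2
    have habs : |a| = |b| := by
      have h1 : (1 / (2 - β)) * |a| ^ (2 - β) = (1 / (2 - β)) * |b| ^ (2 - β) := by
        rw [← hFabs a ha0, ← hFabs b hb0, hab]
      have h2 : |a| ^ (2 - β) = |b| ^ (2 - β) :=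
        mul_left_cancel₀ (show (1 / (2 - β) : ℝ) ≠ 0 by positivity) h1
      calc |a| = (|a| ^ (2 - β)) ^ (2 - β)⁻¹ :=
            (Real.rpow_rpow_inv (abs_nonneg a) h2β.ne').symm
        _ = (|b| ^ (2 - β)) ^ (2 - β)⁻¹ := by rw [h2]
        _ = |b| := Real.rpow_rpow_inv (abs_nonneg b) h2β.ne'
    have hsgn : Real.sign a = Real.sign b := by
      have h3 := hab
      rw [hF] at h3
      simp only [] at h3
      rw [← habs] at h3
      exact mul_left_cancel₀
        (ne_of_gt (mul_pos (show (0:ℝ) < 1 / (2 - β) by positivity)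
          (Real.rpow_pos_of_pos (abs_pos.mpr ha0) _))) h3
    rw [← real_sign_mul_abs a, ← real_sign_mul_abs b, habs, hsgn]
  -- derivative of `F` on `t`
  have hderiv : ∀ z ∈ t, HasDerivWithinAt F (|z| ^ (1 - β)) t z := by
    intro z hz
    have hz0 : z ≠ 0 := by simpa using hz.2
    rcases lt_or_gt_of_ne hz0 with hzneg | hzpos
    · have hg : HasDerivAt (fun u : ℝ => u ^ (2 - β)) ((2 - β) * (-z) ^ (2 - β - 1)) (-z) :=
        Real.hasDerivAt_rpow_const (Or.inl (by linarith))
      have hneg : HasDerivAt (fun x : ℝ => (-x) ^ (2 - β))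
          ((2 - β) * (-z) ^ (2 - β - 1) * (-1)) z := hg.comp z (hasDerivAt_neg z)
      have h1 : HasDerivAt (fun x : ℝ => -((1 / (2 - β)) * (-x) ^ (2 - β)))
          (-((1 / (2 - β)) * ((2 - β) * (-z) ^ (2 - β - 1) * (-1)))) z :=
        (hneg.const_mul _).neg
      have h2 : F =ᶠ[nhds z] fun x : ℝ => -((1 / (2 - β)) * (-x) ^ (2 - β)) := by
        filter_upwards [eventually_lt_nhds hzneg] with x hx
        rw [hF]
        simp only []
        rw [abs_of_neg hx, Real.sign_of_neg hx]
        ring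
      have h3 : HasDerivAt F
          (-((1 / (2 - β)) * ((2 - β) * (-z) ^ (2 - β - 1) * (-1)))) z :=
        h1.congr_of_eventuallyEq h2
      have h4 : -((1 / (2 - β)) * ((2 - β) * (-z) ^ (2 - β - 1) * (-1))) = |z| ^ (1 - β) := by
        rw [abs_of_neg hzneg, show (2 - β - 1 : ℝ) = 1 - β by ring]
        field_simp
      exact (h4 ▸ h3).hasDerivWithinAt
    · have h1 : HasDerivAt (fun x : ℝ => (1 / (2 - β)) * x ^ (2 - β))
          ((1 / (2 - β)) * ((2 - β) * z ^ (2 - β - 1))) z :=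
        (Real.hasDerivAt_rpow_const (Or.inl hzpos.ne')).const_mul _
      have h2 : F =ᶠ[nhds z] fun x : ℝ => (1 / (2 - β)) * x ^ (2 - β) := by
        filter_upwards [eventually_gt_nhds hzpos] with x hx
        rw [hF]
        simp only []
        rw [abs_of_pos hx, Real.sign_of_pos hx, mul_one]
      have h3 : HasDerivAt F ((1 / (2 - β)) * ((2 - β) * z ^ (2 - β - 1))) z :=
        h1.congr_of_eventuallyEq h2
      have h4 : (1 / (2 - β)) * ((2 - β) * z ^ (2 - β - 1)) = |z| ^ (1 - β) := by
        rw [abs_of_pos hzpos, show (2 - β - 1 : ℝ) = 1 - β by ring]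
        field_simp
      exact (h4 ▸ h3).hasDerivWithinAt
  -- change of variables
  rw [show s \ {0} = F '' t from himg.symm,
    lintegral_image_eq_lintegral_abs_deriv_mul' ht hderiv hinj]
  refine setLIntegral_congr_fun ht (fun z hz => ?_)
  have hz0 : z ≠ 0 := by simpa using hz.2
  rw [← ENNReal.ofReal_mul (abs_nonneg _)]
  congr 1
  rw [abs_of_nonneg (Real.rpow_nonneg (abs_nonneg z) _)]
  exact (key z hz0).symm
end
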